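/- arXiv:2512.09655 — 9 statements merged into one kernel-verified Lean document; each statement's English description precedes it below -/
import Mathlib

section
/- The number of cyclic sequences (necklaces of binary strings under rotation) generated by the complemented cycling register of order n, i.e., the number of equivalence classes of binary sequences under the map x -> (shift with complemented feedback), equals (1/(2n)) * sum over odd divisors d of n of phi(d) * 2^(n/d). -/
/-- Next-state map of the complemented cycling register (CCR) of order `n`:
the register shifts, and the new last entry is the complement of the old first entry. -/
def ccrNext (n : ℕ) (x : Fin n → ZMod 2) : Fin n → ZMod 2 :=
  fun i => if h : (i : ℕ) + 1 < n then x ⟨(i : ℕ) + 1, h⟩ else x ⟨0, i.pos⟩ + 1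

private def ccrU {n : ℕ} (hn : 0 < n) (x : Fin n → ZMod 2) (j : ℕ) : ZMod 2 :=
  x ⟨j % n, Nat.mod_lt j hn⟩ + ((j / n : ℕ) : ZMod 2)

private lemma ccrU_lt {n : ℕ} (hn : 0 < n) (x : Fin n → ZMod 2) {j : ℕ} (h : j < n) :
    ccrU hn x j = x ⟨j, h⟩ := by
  unfold ccrU
  simp [Nat.mod_eq_of_lt h, Nat.div_eq_of_lt h]

private lemma ccrU_add_n {n : ℕ} (hn : 0 < n) (x : Fin n → ZMod 2) (j : ℕ) :
    ccrU hn x (j + n) = ccrU hn x j + 1 := by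
  unfold ccrU
  simp only [Nat.add_mod_right, Nat.add_div_right _ hn]
  push_cast
  ring

private lemma ccrU_next {n : ℕ} (hn : 0 < n) (x : Fin n → ZMod 2) (j : ℕ) :
    ccrU hn (ccrNext n x) j = ccrU hn x (j + 1) := by
  have hjm := Nat.div_add_mod j n
  unfold ccrU ccrNext
  by_cases h : j % n + 1 < n
  · have h1 : (j+1) / n = j / n ∧ (j+1) % n = j % n + 1 := by
      rw [Nat.div_mod_unique hn]
      omega
    rw [dif_pos h]
    simp only [h1.1, h1.2]
  · have he : j % n + 1 = n := by have := Nat.mod_lt j hn; omega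
    have h1 : (j+1) / n = j / n + 1 ∧ (j+1) % n = 0 := by
      rw [Nat.div_mod_unique hn]
      rw [Nat.mul_add, Nat.mul_one]
      omega
    rw [dif_neg h]
    simp only [h1.1, h1.2]
    push_cast
    ring

private lemma ccrU_iterate {n : ℕ} (hn : 0 < n) (x : Fin n → ZMod 2) (k j : ℕ) :
    ccrU hn ((ccrNext n)^[k] x) j = ccrU hn x (j + k) := by
  induction k generalizing x with
  | zero => rfl
  | succ k ih =>
    rw [Function.iterate_succ_apply, ih, ccrU_next]
    ring_nf

private lemma ccrIter_apply {n : ℕ} (hn : 0 < n) (x : Fin n → ZMod 2) (k : ℕ) (i : Fin n) :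
    ((ccrNext n)^[k] x) i = ccrU hn x ((i : ℕ) + k) := by
  rw [← ccrU_iterate hn x k i, ccrU_lt hn _ i.isLt]

private lemma ccrIter_eq_iff {n : ℕ} (hn : 0 < n) (x : Fin n → ZMod 2) (k : ℕ) :
    (ccrNext n)^[k] x = x ↔ ∀ j, ccrU hn x (j + k) = ccrU hn x j := by
  constructor
  · intro h j
    rw [← ccrU_iterate hn x k j, h]
  · intro h
    funext i
    rw [ccrIter_apply hn x k i, h, ccrU_lt hn x i.isLt]

private lemma px_mul {n : ℕ} (hn : 0 < n) (x : Fin n → ZMod 2) {m : ℕ}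
    (h : ∀ j, ccrU hn x (j + m) = ccrU hn x j) (t : ℕ) :
    ∀ j, ccrU hn x (j + t * m) = ccrU hn x j := by
  induction t with
  | zero => simp
  | succ t ih =>
    intro j
    have : j + (t + 1) * m = (j + m) + t * m := by ring
    rw [this, ih, h]

private lemma px_two_n {n : ℕ} (hn : 0 < n) (x : Fin n → ZMod 2) (j : ℕ) :
    ccrU hn x (j + 2 * n) = ccrU hn x j := by
  have : j + 2 * n = j + n + n := by ring
  rw [this, ccrU_add_n, ccrU_add_n, add_assoc]
  norm_num
  decide

private lemma px_gcd {n : ℕ} (hn : 0 < n) (x : Fin n → ZMod 2) (a b : ℕ)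
    (ha : ∀ j, ccrU hn x (j + a) = ccrU hn x j)
    (hb : ∀ j, ccrU hn x (j + b) = ccrU hn x j) :
    ∀ j, ccrU hn x (j + Nat.gcd a b) = ccrU hn x j := by
  induction a, b using Nat.gcd.induction with
  | H0 b => simpa using (fun j => hb j)
  | H1 a b hapos ih =>
    rw [Nat.gcd_rec]
    refine ih ?_ ha
    intro j
    have h1 : j + b = (j + b % a) + b / a * a := by
      have := Nat.div_add_mod b a
      rw [Nat.mul_comm] at this
      omega
    have h2 := px_mul hn x ha (b / a) (j + b % a)
    rw [← hb j, h1]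
    exact h2.symm

private lemma ccrIter_gcd_iff {n : ℕ} (hn : 0 < n) (x : Fin n → ZMod 2) (k : ℕ) :
    (ccrNext n)^[k] x = x ↔ (ccrNext n)^[Nat.gcd (2 * n) k] x = x := by
  rw [ccrIter_eq_iff hn, ccrIter_eq_iff hn]
  constructor
  · intro h
    exact px_gcd hn x (2 * n) k (px_two_n hn x) h
  · intro h j
    obtain ⟨t, ht⟩ : Nat.gcd (2 * n) k ∣ k := Nat.gcd_dvd_right _ _
    rw [ht, Nat.mul_comm]
    exact px_mul hn x h t j

private lemma qx_mul {n : ℕ} (hn : 0 < n) (x : Fin n → ZMod 2) {h : ℕ}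
    (hq : ∀ j, ccrU hn x (j + h) = ccrU hn x j + 1) (t : ℕ) :
    ∀ j, ccrU hn x (j + t * h) = ccrU hn x j + (t : ZMod 2) := by
  induction t with
  | zero => simp
  | succ t ih =>
    intro j
    have : j + (t + 1) * h = (j + t * h) + h := by ring
    rw [this, hq, ih]
    push_cast
    ring

private lemma ccrIter_odd_iff {n : ℕ} (hn : 0 < n) {e : ℕ} (he : Odd e) (hd : e ∣ n)
    (x : Fin n → ZMod 2) :
    (ccrNext n)^[2 * (n / e)] x = x ↔
      ∀ j, ccrU hn x (j + n / e) = ccrU hn x j + 1 := by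
  obtain ⟨t, ht⟩ := he
  have he0 : 0 < e := by omega
  set h := n / e with hh
  have hne : n = h * e := (Nat.div_mul_cancel hd).symm
  rw [ccrIter_eq_iff hn]
  constructor
  · intro hp j
    have h1 : j + n = (j + h) + t * (2 * h) := by
      rw [hne, ht]; ring
    have h2 := px_mul hn x hp t (j + h)
    rw [← ccrU_add_n hn x j, h1, h2]
  · intro hq j
    have h1 : j + 2 * h = (j + h) + h := by ring
    rw [h1, hq, hq, add_assoc]
    norm_num
    decide

private lemma card_fix_even {n : ℕ} (hn : 0 < n) {g f : ℕ} (hng : n = f * g) :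
    Nat.card {x : Fin n → ZMod 2 // (ccrNext n)^[g] x = x} = 0 := by
  rw [Nat.card_eq_zero]
  left
  constructor
  rintro ⟨x, hx⟩
  rw [ccrIter_eq_iff hn] at hx
  have h1 := px_mul hn x hx f 0
  rw [← hng] at h1
  rw [ccrU_add_n] at h1
  simp at h1

private lemma uval_lemma {n : ℕ} (hn : 0 < n) {h e : ℕ} (hh : 0 < h) (hne : n = h * e)
    (he : Odd e) (z : Fin h → ZMod 2) (j : ℕ) :
    ccrU hn (fun i => z ⟨(i : ℕ) % h, Nat.mod_lt _ hh⟩ + (((i : ℕ) / h : ℕ) : ZMod 2)) j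
      = z ⟨j % h, Nat.mod_lt _ hh⟩ + ((j / h : ℕ) : ZMod 2) := by
  have hdvd : h ∣ n := ⟨e, hne⟩
  have he2 : (e : ZMod 2) = 1 := by
    have : e % 2 = 1 := Nat.odd_iff.mp he
    rw [← ZMod.natCast_mod, this, Nat.cast_one]
  have hmm : j % n % h = j % h := Nat.mod_mod_of_dvd j hdvd
  have hdd : j / h = j % n / h + e * (j / n) := by
    conv_lhs => rw [← Nat.div_add_mod j n]
    rw [hne, Nat.mul_assoc, Nat.mul_add_div hh, Nat.add_comm]
  unfold ccrU
  simp only [hmm, hdd]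
  push_cast
  rw [he2]
  ring

private lemma card_qx {n : ℕ} (hn : 0 < n) {h e : ℕ} (hh : 0 < h) (hne : n = h * e)
    (he : Odd e) :
    Nat.card {x : Fin n → ZMod 2 // ∀ j, ccrU hn x (j + h) = ccrU hn x j + 1} = 2 ^ h := by
  have hdvd : h ∣ n := ⟨e, hne⟩
  have hle : h ≤ n := Nat.le_of_dvd hn hdvd
  have uval := uval_lemma hn hh hne he
  set Φ : (Fin h → ZMod 2) → {x : Fin n → ZMod 2 // ∀ j, ccrU hn x (j + h) = ccrU hn x j + 1} :=
    fun z => ⟨fun i => z ⟨(i : ℕ) % h, Nat.mod_lt _ hh⟩ + (((i : ℕ) / h : ℕ) : ZMod 2), by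
      intro j
      rw [uval z (j + h), uval z j]
      simp only [Nat.add_mod_right, Nat.add_div_right _ hh]
      push_cast
      ring⟩ with hΦ
  have hbij : Function.Bijective Φ := by
    constructor
    · intro z1 z2 hz
      funext i
      have h2 := congrFun (congrArg Subtype.val hz) ⟨(i : ℕ), lt_of_lt_of_le i.isLt hle⟩
      simp only [hΦ, Nat.mod_eq_of_lt i.isLt, Nat.div_eq_of_lt i.isLt, Nat.cast_zero,
        add_zero, Fin.eta] at h2
      exact h2
    · rintro ⟨x, hx⟩
      refine ⟨fun i => x ⟨(i : ℕ), lt_of_lt_of_le i.isLt hle⟩, Subtype.ext ?_⟩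
      funext i
      show x ⟨(i : ℕ) % h, _⟩ + (((i : ℕ) / h : ℕ) : ZMod 2) = x i
      have h3 := qx_mul hn x hx ((i : ℕ) / h) ((i : ℕ) % h)
      rw [Nat.mod_add_div'] at h3
      rw [ccrU_lt hn x i.isLt, Fin.eta] at h3
      rw [ccrU_lt hn x (lt_of_lt_of_le (Nat.mod_lt _ hh) hle)] at h3
      rw [h3]
  have hc : Nat.card (Fin h → ZMod 2) = 2 ^ h := by
    simp [Nat.card_eq_fintype_card]
  rw [← hc]
  exact (Nat.card_congr (Equiv.ofBijective Φ hbij)).symm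

private lemma sum_range_gcd (m : ℕ) (hm : 0 < m) (F : ℕ → ℕ) :
    ∑ k ∈ Finset.range m, F (Nat.gcd m k) =
      ∑ d ∈ m.divisors, Nat.totient (m / d) * F d := by
  rw [← Finset.sum_fiberwise_of_maps_to (g := fun k => Nat.gcd m k) (t := m.divisors)
    (fun k _ => Nat.mem_divisors.mpr ⟨Nat.gcd_dvd_left _ _, hm.ne'⟩)]
  refine Finset.sum_congr rfl fun d hd => ?_
  have hdd := (Nat.mem_divisors.mp hd).1
  rw [Nat.totient_div_of_dvd hdd]
  rw [Finset.sum_congr rfl (fun k hk => congrArg F (Finset.mem_filter.mp hk).2),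
    Finset.sum_const, smul_eq_mul]

private lemma sum_c_eq {n : ℕ} (hn : 0 < n) :
    ∑ k ∈ Finset.range (2 * n),
        Nat.card {x : Fin n → ZMod 2 // (ccrNext n)^[k] x = x} =
      ∑ d ∈ n.divisors.filter (fun d => Odd d), Nat.totient d * 2 ^ (n / d) := by
  set c : ℕ → ℕ := fun k => Nat.card {x : Fin n → ZMod 2 // (ccrNext n)^[k] x = x} with hc
  have h2n : 0 < 2 * n := by omega
  have hcg : ∀ k, c k = c (Nat.gcd (2 * n) k) := fun k =>
    Nat.card_congr (Equiv.subtypeEquivRight fun x => ccrIter_gcd_iff hn x k)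
  calc ∑ k ∈ Finset.range (2 * n), c k
      = ∑ k ∈ Finset.range (2 * n), c (Nat.gcd (2 * n) k) :=
        Finset.sum_congr rfl fun k _ => hcg k
    _ = ∑ d ∈ (2 * n).divisors, Nat.totient (2 * n / d) * c d := sum_range_gcd _ h2n c
    _ = ∑ d ∈ (2 * n).divisors, Nat.totient (2 * n / (2 * n / d)) * c (2 * n / d) :=
        (Nat.sum_div_divisors (2 * n) (fun d => Nat.totient (2 * n / d) * c d)).symm
    _ = ∑ d ∈ (2 * n).divisors, Nat.totient d * (if Odd d then 2 ^ (n / d) else 0) := by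
        refine Finset.sum_congr rfl fun e hd => ?_
        obtain ⟨hdd, -⟩ := Nat.mem_divisors.mp hd
        have he0 : 0 < e := Nat.pos_of_mem_divisors hd
        rw [Nat.div_div_self hdd h2n.ne']
        congr 1
        by_cases he : Odd e
        · rw [if_pos he]
          have hen : e ∣ n := (Nat.Coprime.dvd_mul_left he.coprime_two_right).mp hdd
          have hq : 2 * n / e = 2 * (n / e) := Nat.mul_div_assoc 2 hen
          have hne : n = (n / e) * e := (Nat.div_mul_cancel hen).symm
          have hh0 : 0 < n / e := Nat.div_pos (Nat.le_of_dvd hn hen) he0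
          rw [hq]
          show Nat.card {x : Fin n → ZMod 2 // (ccrNext n)^[2 * (n / e)] x = x} = 2 ^ (n / e)
          rw [Nat.card_congr (Equiv.subtypeEquivRight fun x => ccrIter_odd_iff hn he hen x)]
          exact card_qx hn hh0 hne he
        · rw [if_neg he]
          obtain ⟨f, hf'⟩ := Nat.not_odd_iff_even.mp he
          have hf : e = 2 * f := by omega
          subst hf
          have h2 : 2 * n = 2 * f * (2 * n / (2 * f)) := (Nat.mul_div_cancel' hdd).symm
          have h4 : 2 * n = 2 * (f * (2 * n / (2 * f))) := by
            conv_lhs => rw [h2]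
            ring
          have hng : n = f * (2 * n / (2 * f)) := Nat.eq_of_mul_eq_mul_left two_pos h4
          exact card_fix_even hn hng
    _ = ∑ d ∈ (2 * n).divisors.filter (fun d => Odd d), Nat.totient d * 2 ^ (n / d) := by
        rw [Finset.sum_filter]
        refine Finset.sum_congr rfl fun d _ => ?_
        by_cases hd : Odd d <;> simp [hd]
    _ = ∑ d ∈ n.divisors.filter (fun d => Odd d), Nat.totient d * 2 ^ (n / d) := by
        congr 1
        ext d
        simp only [Finset.mem_filter, Nat.mem_divisors]
        constructor
        · rintro ⟨⟨hd, -⟩, ho⟩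
          exact ⟨⟨(Nat.Coprime.dvd_mul_left ho.coprime_two_right).mp hd, hn.ne'⟩, ho⟩
        · rintro ⟨⟨hd, -⟩, ho⟩
          exact ⟨⟨hd.mul_left 2, h2n.ne'⟩, ho⟩

/-- The number of cycles (forward orbits) of the CCR of order `n`, multiplied by `2n`,
equals `∑_{d ∣ n, d odd} φ(d) 2^{n/d}`. -/
theorem stmt0 (n : ℕ) (hn : 0 < n) :
    Nat.card {O : Set (Fin n → ZMod 2) //
        ∃ x : Fin n → ZMod 2, O = {y | ∃ k : ℕ, (ccrNext n)^[k] x = y}} * (2 * n) =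
      ∑ d ∈ n.divisors.filter (fun d => Odd d), Nat.totient d * 2 ^ (n / d) := by
  haveI : NeZero (2 * n) := ⟨by omega⟩
  have hid : ∀ x : Fin n → ZMod 2, (ccrNext n)^[2 * n] x = x := fun x =>
    (ccrIter_eq_iff hn x (2 * n)).mpr (px_two_n hn x)
  have hmod : ∀ (m : ℕ) (x : Fin n → ZMod 2),
      (ccrNext n)^[m] x = (ccrNext n)^[m % (2 * n)] x := by
    intro m x
    conv_lhs => rw [← Nat.mod_add_div m (2 * n)]
    rw [Function.iterate_add_apply, Function.iterate_mul]
    exact congrArg _ (Function.iterate_fixed (hid x) _)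
  letI act : MulAction (Multiplicative (ZMod (2 * n))) (Fin n → ZMod 2) :=
    { smul := fun g x => (ccrNext n)^[(Multiplicative.toAdd g).val] x
      one_smul := fun x => by
        show (ccrNext n)^[(Multiplicative.toAdd (1 : Multiplicative (ZMod (2 * n)))).val] x = x
        rw [toAdd_one, ZMod.val_zero]
        rfl
      mul_smul := fun a b x => by
        show (ccrNext n)^[(Multiplicative.toAdd a + Multiplicative.toAdd b).val] x
            = (ccrNext n)^[(Multiplicative.toAdd a).val]
                ((ccrNext n)^[(Multiplicative.toAdd b).val] x)
        rw [ZMod.val_add, ← hmod, ← Function.iterate_add_apply] }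
  set G := Multiplicative (ZMod (2 * n)) with hG
  have horb : ∀ x : Fin n → ZMod 2,
      MulAction.orbit G x = {y | ∃ k : ℕ, (ccrNext n)^[k] x = y} := by
    intro x
    ext y
    constructor
    · rintro ⟨g, rfl⟩
      exact ⟨(Multiplicative.toAdd g).val, rfl⟩
    · rintro ⟨k, rfl⟩
      refine ⟨Multiplicative.ofAdd ((k : ZMod (2 * n))), ?_⟩
      show (ccrNext n)^[(Multiplicative.toAdd (Multiplicative.ofAdd ((k : ZMod (2 * n))))).val] x
          = (ccrNext n)^[k] x
      rw [toAdd_ofAdd, ZMod.val_natCast]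
      exact (hmod k x).symm
  let E0 : Quotient (MulAction.orbitRel G (Fin n → ZMod 2)) →
      {O : Set (Fin n → ZMod 2) // ∃ x : Fin n → ZMod 2, O = {y | ∃ k : ℕ, (ccrNext n)^[k] x = y}} :=
    Quotient.lift (fun x => ⟨{y | ∃ k : ℕ, (ccrNext n)^[k] x = y}, x, rfl⟩)
      (fun a b hab => Subtype.ext (by
        show {y | ∃ k : ℕ, (ccrNext n)^[k] a = y} = {y | ∃ k : ℕ, (ccrNext n)^[k] b = y}
        rw [← horb a, ← horb b]
        exact MulAction.orbit_eq_iff.mpr (MulAction.orbitRel_apply.mp hab)))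
  have hE0 : Function.Bijective E0 := by
    constructor
    · rintro ⟨a⟩ ⟨b⟩ hab
      have h1 : {y | ∃ k : ℕ, (ccrNext n)^[k] a = y} = {y | ∃ k : ℕ, (ccrNext n)^[k] b = y} :=
        congrArg Subtype.val hab
      rw [← horb a, ← horb b] at h1
      exact Quotient.sound (MulAction.orbitRel_apply.mpr (MulAction.orbit_eq_iff.mp h1))
    · rintro ⟨O, x, rfl⟩
      exact ⟨Quotient.mk _ x, rfl⟩
  haveI : Fintype (Quotient (MulAction.orbitRel G (Fin n → ZMod 2))) := Fintype.ofFinite _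
  haveI : ∀ g : G, Fintype (MulAction.fixedBy (Fin n → ZMod 2) g) := fun g => Fintype.ofFinite _
  have hburn := MulAction.sum_card_fixedBy_eq_card_orbits_mul_card_group G (Fin n → ZMod 2)
  have hcardG : Fintype.card G = 2 * n :=
    (Fintype.card_congr (Multiplicative.toAdd (α := ZMod (2 * n)))).trans (ZMod.card (2 * n))
  have hfix : ∀ g : G, Fintype.card (MulAction.fixedBy (Fin n → ZMod 2) g) =
      Nat.card {x : Fin n → ZMod 2 //
        (ccrNext n)^[(Multiplicative.toAdd g).val] x = x} := fun g => by
    rw [← Nat.card_eq_fintype_card]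
    exact Nat.card_congr (Equiv.subtypeEquivRight fun x => Iff.rfl)
  have hsum : ∑ g : G, Fintype.card (MulAction.fixedBy (Fin n → ZMod 2) g) =
      ∑ k ∈ Finset.range (2 * n),
        Nat.card {x : Fin n → ZMod 2 // (ccrNext n)^[k] x = x} := by
    rw [Finset.sum_congr rfl (fun g _ => hfix g)]
    rw [Fintype.sum_equiv (Multiplicative.toAdd (α := ZMod (2 * n)))
      _ (fun z => Nat.card {x : Fin n → ZMod 2 // (ccrNext n)^[z.val] x = x}) (fun g => rfl)]
    refine Finset.sum_nbij' (i := fun z => ZMod.val z) (j := fun k => ((k : ℕ) : ZMod (2 * n)))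
      (fun z _ => Finset.mem_range.mpr (ZMod.val_lt z)) (fun k _ => Finset.mem_univ _)
      (fun z _ => ZMod.natCast_rightInverse z) ?_ (fun z _ => rfl)
    intro k hk
    show ((k : ℕ) : ZMod (2 * n)).val = k
    rw [ZMod.val_natCast, Nat.mod_eq_of_lt (Finset.mem_range.mp hk)]
  have hcount : Nat.card {O : Set (Fin n → ZMod 2) //
      ∃ x : Fin n → ZMod 2, O = {y | ∃ k : ℕ, (ccrNext n)^[k] x = y}} =
      Fintype.card (Quotient (MulAction.orbitRel G (Fin n → ZMod 2))) := by
    rw [← Nat.card_eq_fintype_card]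
    exact (Nat.card_congr (Equiv.ofBijective E0 hE0)).symm
  rw [hcount, ← sum_c_eq hn, ← hsum, hburn, hcardG]
end

section
/- Every state cycle of the complemented cycling register CCR_n corresponds to a binary cyclic sequence whose period divides 2n but does not divide n, and this sequence is self-dual (equal to its cyclic sequence of complements after a shift by its half-period); consequently Z*(n) = sum over divisors d of 2n with d not dividing n of SD(d), where SD(d) is the number of self-dual binary cyclic sequences of period exactly d. -/
/-- The output sequence of the CCR of order `n` started at state `x`
(read off from the first cell at each time step). -/
def ccrSeq (n : ℕ) (x : Fin n → ZMod 2) : ℕ → ZMod 2 :=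
  fun i => if h : 0 < n then (ccrNext n)^[i] x ⟨0, h⟩ else 0

/-- `d` is a period of the sequence `s`. -/
def IsPeriodOf (s : ℕ → ZMod 2) (d : ℕ) : Prop := ∀ i, s (i + d) = s i

/-- `d` is the least (exact) period of `s`. -/
def IsLeastPeriod (s : ℕ → ZMod 2) (d : ℕ) : Prop :=
  0 < d ∧ IsPeriodOf s d ∧ ∀ e, 0 < e → IsPeriodOf s e → d ≤ e

/-- `SD d`: the number of self-dual binary cyclic sequences (counted up to
cyclic shift) of least period exactly `d`, where self-dual means that shifting
by the half period `d/2` complements every bit. -/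
noncomputable def SD (d : ℕ) : ℕ :=
  Nat.card {O : Set (ℕ → ZMod 2) // ∃ s : ℕ → ZMod 2,
    IsLeastPeriod s d ∧ (∀ i, s (i + d / 2) = s i + 1) ∧
    O = {t | ∃ k : ℕ, ∀ i, t i = s (i + k)}}

namespace CCR

lemma z2 : ∀ a : ZMod 2, a + 1 ≠ a := by decide

lemma z2' : ∀ a : ZMod 2, a + 1 + 1 = a := by decide

variable {n : ℕ}

lemma iter_zero_eq (hn : 0 < n) :
    ∀ j, ∀ h : j < n, ∀ x : Fin n → ZMod 2, (ccrNext n)^[j] x ⟨0, hn⟩ = x ⟨j, h⟩ := by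
  intro j
  induction j with
  | zero => intro h x; rfl
  | succ j ih =>
    intro h x
    have hj : j < n := Nat.lt_of_succ_lt h
    rw [Function.iterate_succ_apply, ih hj]
    simp only [ccrNext]
    rw [dif_pos h]

lemma seq_def (hn : 0 < n) (x : Fin n → ZMod 2) (i : ℕ) :
    ccrSeq n x i = (ccrNext n)^[i] x ⟨0, hn⟩ := by
  simp [ccrSeq, hn]

lemma iterN (hn : 0 < n) (x : Fin n → ZMod 2) :
    (ccrNext n)^[n] x ⟨0, hn⟩ = x ⟨0, hn⟩ + 1 := by
  have h1 : n = (n - 1) + 1 := (Nat.succ_pred_eq_of_pos hn).symm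
  have h2 : n - 1 < n := Nat.pred_lt hn.ne'
  calc (ccrNext n)^[n] x ⟨0, hn⟩ = (ccrNext n)^[n-1] (ccrNext n x) ⟨0, hn⟩ := by
        have e1 : (ccrNext n)^[n] x = (ccrNext n)^[n-1+1] x := by congr 1
        rw [e1, Function.iterate_succ_apply]
    _ = (ccrNext n x) ⟨n-1, h2⟩ := iter_zero_eq hn _ h2 _
    _ = x ⟨0, hn⟩ + 1 := by
        simp only [ccrNext]
        rw [dif_neg (by omega)]

lemma seq_rec (hn : 0 < n) (x : Fin n → ZMod 2) (i : ℕ) :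
    ccrSeq n x (i + n) = ccrSeq n x i + 1 := by
  rw [seq_def hn, seq_def hn, Nat.add_comm i n, Function.iterate_add_apply, iterN hn]

lemma seq_per2n (hn : 0 < n) (x : Fin n → ZMod 2) : IsPeriodOf (ccrSeq n x) (2 * n) := by
  intro i
  have : i + 2 * n = (i + n) + n := by ring
  rw [this, seq_rec hn, seq_rec hn, z2']

lemma state (hn : 0 < n) (x : Fin n → ZMod 2) (k j : ℕ) (h : j < n) :
    (ccrNext n)^[k] x ⟨j, h⟩ = ccrSeq n x (j + k) := by
  rw [seq_def hn, Function.iterate_add_apply, iter_zero_eq hn j h]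

lemma seq_shift (hn : 0 < n) (x : Fin n → ZMod 2) (k i : ℕ) :
    ccrSeq n ((ccrNext n)^[k] x) i = ccrSeq n x (i + k) := by
  rw [seq_def hn, seq_def hn, ← Function.iterate_add_apply]

lemma iter2n (hn : 0 < n) (x : Fin n → ZMod 2) : (ccrNext n)^[2 * n] x = x := by
  funext j
  obtain ⟨j, hj⟩ := j
  rw [state hn x _ j hj]
  have hx : x ⟨j, hj⟩ = ccrSeq n x j := by simpa using state hn x 0 j hj
  rw [hx]
  exact seq_per2n hn x j

lemma iter2n_mul (hn : 0 < n) (m : ℕ) (x : Fin n → ZMod 2) :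
    (ccrNext n)^[2 * n * m] x = x := by
  induction m with
  | zero => rfl
  | succ m ih =>
    have : 2 * n * (m + 1) = 2 * n * m + 2 * n := by ring
    rw [this, Function.iterate_add_apply, iter2n hn, ih]

lemma period_mul {s : ℕ → ZMod 2} {d : ℕ} (hp : IsPeriodOf s d) (m i : ℕ) :
    s (i + d * m) = s i := by
  induction m with
  | zero => rfl
  | succ m ih =>
    have : i + d * (m + 1) = (i + d * m) + d := by ring
    rw [this, hp, ih]

lemma period_of_dvd {s : ℕ → ZMod 2} {d e : ℕ} (hde : d ∣ e) (hp : IsPeriodOf s d) :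
    IsPeriodOf s e := by
  obtain ⟨m, rfl⟩ := hde
  intro i; exact period_mul hp m i

lemma least_dvd {s : ℕ → ZMod 2} {d e : ℕ} (hd : IsLeastPeriod s d) (he : IsPeriodOf s e) :
    d ∣ e := by
  obtain ⟨hd0, hdp, hdmin⟩ := hd
  have key : IsPeriodOf s (e % d) := by
    intro i
    have h1 : i + e = (i + e % d) + d * (e / d) := by
      have := Nat.mod_add_div e d; omega
    have h2 := he i
    rw [h1, period_mul hdp] at h2
    rw [h2]
  rcases Nat.eq_zero_or_pos (e % d) with h | h
  · exact Nat.dvd_of_mod_eq_zero h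
  · exact absurd (hdmin _ h key) (by have := Nat.mod_lt e hd0; omega)

lemma least_unique {s : ℕ → ZMod 2} {d d' : ℕ} (h : IsLeastPeriod s d) (h' : IsLeastPeriod s d') :
    d = d' :=
  le_antisymm (h.2.2 _ h'.1 h'.2.1) (h'.2.2 _ h.1 h.2.1)

/-- half-period argument -/
lemma half_of_rec {s : ℕ → ZMod 2} {d : ℕ} (hrec : ∀ i, s (i + n) = s i + 1)
    (hd2n : d ∣ 2 * n) (hdn : ¬ d ∣ n) (hp : IsPeriodOf s d) :
    ∀ i, s (i + d / 2) = s i + 1 := by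
  obtain ⟨m, hm⟩ := hd2n
  have hmodd : m % 2 = 1 := by
    rcases Nat.even_or_odd m with ⟨m', rfl⟩ | ⟨m', rfl⟩
    · exfalso
      have h2 : 2 * n = 2 * (d * m') := by rw [hm]; ring
      exact hdn ⟨m', by omega⟩
    · omega
  have hdeven : 2 ∣ d := by
    rcases Nat.even_or_odd d with he | ho
    · exact he.two_dvd
    · exfalso
      have : Odd (d * m) := ho.mul (Nat.odd_iff.2 hmodd)
      rw [← hm] at this
      exact (Nat.not_odd_iff_even.mpr ⟨n, by ring⟩) this
  obtain ⟨c, rfl⟩ := hdeven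
  have hc : (2 * c) / 2 = c := by omega
  obtain ⟨j, hj⟩ : ∃ j, m = 2 * j + 1 := ⟨m / 2, by omega⟩
  have hn' : n = c + 2 * c * j := by
    have h2 : 2 * n = 2 * (c + 2 * c * j) := by rw [hm, hj]; ring
    omega
  intro i
  have h1 : i + n = (i + c) + (2 * c) * j := by omega
  have h2 := hrec i
  rw [h1, period_mul hp] at h2
  rw [hc, h2]

lemma exists_least {s : ℕ → ZMod 2} {e : ℕ} (he : 0 < e) (hp : IsPeriodOf s e) :
    ∃ d, IsLeastPeriod s d := by
  classical
  have hex : ∃ m, 0 < m ∧ IsPeriodOf s m := ⟨e, he, hp⟩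
  refine ⟨Nat.find hex, (Nat.find_spec hex).1, (Nat.find_spec hex).2, ?_⟩
  intro e' he' hp'
  exact Nat.find_min' hex ⟨he', hp'⟩

/-- Part 1 -/
lemma main1 (hn : 0 < n) (x : Fin n → ZMod 2) :
    ∃ d : ℕ, d ∣ 2 * n ∧ ¬ d ∣ n ∧ IsLeastPeriod (ccrSeq n x) d ∧
      (∀ i, ccrSeq n x (i + d / 2) = ccrSeq n x i + 1) := by
  obtain ⟨d, hd⟩ := exists_least (by omega) (seq_per2n hn x)
  have hdvd : d ∣ 2 * n := least_dvd hd (seq_per2n hn x)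
  have hndvd : ¬ d ∣ n := by
    intro hdn
    have hpn : IsPeriodOf (ccrSeq n x) n := period_of_dvd hdn hd.2.1
    have := hpn 0
    rw [seq_rec hn x 0] at this
    exact z2 _ this
  exact ⟨d, hdvd, hndvd, hd, half_of_rec (seq_rec hn x) hdvd hndvd hd.2.1⟩

/-- recurrence from self-duality -/
lemma rec_of_half {s : ℕ → ZMod 2} {d : ℕ} (hd2n : d ∣ 2 * n) (hdn : ¬ d ∣ n)
    (hp : IsPeriodOf s d) (hsd : ∀ i, s (i + d / 2) = s i + 1) :
    ∀ i, s (i + n) = s i + 1 := by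
  obtain ⟨m, hm⟩ := hd2n
  have hmodd : m % 2 = 1 := by
    rcases Nat.even_or_odd m with ⟨m', rfl⟩ | ⟨m', rfl⟩
    · exfalso
      have h2 : 2 * n = 2 * (d * m') := by rw [hm]; ring
      exact hdn ⟨m', by omega⟩
    · omega
  have hdeven : 2 ∣ d := by
    rcases Nat.even_or_odd d with he | ho
    · exact he.two_dvd
    · exfalso
      have : Odd (d * m) := ho.mul (Nat.odd_iff.2 hmodd)
      rw [← hm] at this
      exact (Nat.not_odd_iff_even.mpr ⟨n, by ring⟩) this
  obtain ⟨c, rfl⟩ := hdeven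
  have hc : (2 * c) / 2 = c := by omega
  obtain ⟨j, hj⟩ : ∃ j, m = 2 * j + 1 := ⟨m / 2, by omega⟩
  have hn' : n = c + 2 * c * j := by
    have h2 : 2 * n = 2 * (c + 2 * c * j) := by rw [hm, hj]; ring
    omega
  intro i
  have h1 : i + n = (i + c) + (2 * c) * j := by omega
  rw [h1, period_mul hp, ← hc, hsd]

lemma build (hn : 0 < n) (s : ℕ → ZMod 2) (hrec : ∀ i, s (i + n) = s i + 1) :
    ccrSeq n (fun j : Fin n => s j) = s := by
  have key : ∀ i : ℕ, ∀ j : ℕ, ∀ h : j < n,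
      (ccrNext n)^[i] (fun j : Fin n => s j) ⟨j, h⟩ = s (j + i) := by
    intro i
    induction i with
    | zero => intro j h; rfl
    | succ i ih =>
      intro j h
      rw [Function.iterate_succ_apply', ccrNext]
      by_cases h2 : j + 1 < n
      · rw [dif_pos h2, ih (j+1) h2]
        congr 1; omega
      · rw [dif_neg h2, ih 0 hn]
        have hn1 : n = j + 1 := by omega
        rw [Nat.zero_add, ← hrec i]
        congr 1; omega
  funext i
  rw [seq_def hn, key i 0 hn, Nat.zero_add]

end CCR

namespace CCR

lemma shift_period {s : ℕ → ZMod 2} (h2n : IsPeriodOf s (2 * n)) (hn : 0 < n) {k e : ℕ}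
    (he : IsPeriodOf (fun i => s (i + k)) e) : IsPeriodOf s e := by
  intro j
  have h1 : s (j + e) = s (j + 2 * n * k + e) := by
    rw [Nat.add_right_comm]
    exact (period_mul (d := 2 * n) h2n k (j + e)).symm
  have h2 : s (j + 2 * n * k) = s j := period_mul h2n k j
  have hk : k ≤ 2 * n * k := Nat.le_mul_of_pos_left k (by omega)
  have h3 : s (j + 2 * n * k + e) = s (j + 2 * n * k) := by
    have := he (j + 2 * n * k - k)
    simpa [show j + 2 * n * k - k + e + k = j + 2 * n * k + e by omega,
      show j + 2 * n * k - k + k = j + 2 * n * k by omega] using this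
  rw [h1, h3, h2]

lemma shift_least {s : ℕ → ZMod 2} (h2n : IsPeriodOf s (2 * n)) (hn : 0 < n) {k d : ℕ}
    (hd : IsLeastPeriod s d) : IsLeastPeriod (fun i => s (i + k)) d := by
  refine ⟨hd.1, ?_, ?_⟩
  · intro i
    simpa [Nat.add_right_comm] using hd.2.1 (i + k)
  · intro e he hpe
    exact hd.2.2 e he (shift_period h2n hn hpe)

def seqOrbit (s : ℕ → ZMod 2) : Set (ℕ → ZMod 2) := {t | ∃ k : ℕ, ∀ i, t i = s (i + k)}

lemma seqOrbit_shift {s : ℕ → ZMod 2} (h2n : IsPeriodOf s (2 * n)) (hn : 0 < n) (k : ℕ) :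
    seqOrbit (fun i => s (i + k)) = seqOrbit s := by
  ext t
  constructor
  · rintro ⟨k', hk'⟩
    exact ⟨k' + k, fun i => by rw [hk' i]; simp only []; rw [Nat.add_assoc]⟩
  · rintro ⟨k', hk'⟩
    refine ⟨k' + 2 * n * k - k, fun i => ?_⟩
    have hk : k ≤ 2 * n * k := Nat.le_mul_of_pos_left k (by omega)
    have h1 : i + (k' + 2 * n * k - k) + k = (i + k') + 2 * n * k := by omega
    rw [hk' i, ← period_mul h2n k (i + k'), ← h1]

def stOrbit (n : ℕ) (x : Fin n → ZMod 2) : Set (Fin n → ZMod 2) :=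
  {y | ∃ k : ℕ, (ccrNext n)^[k] x = y}

lemma stOrbit_eq_of_mem (hn : 0 < n) {x x' : Fin n → ZMod 2} {k : ℕ}
    (h : (ccrNext n)^[k] x = x') : stOrbit n x = stOrbit n x' := by
  ext y
  constructor
  · rintro ⟨m, rfl⟩
    refine ⟨m + 2 * n * k - k, ?_⟩
    rw [← h, ← Function.iterate_add_apply]
    have hk : k ≤ 2 * n * k := Nat.le_mul_of_pos_left k (by omega)
    have : m + 2 * n * k - k + k = m + 2 * n * k := by omega
    rw [this, Nat.add_comm m (2 * n * k), Function.iterate_add_apply, iter2n_mul hn]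
  · rintro ⟨m, rfl⟩
    exact ⟨m + k, by rw [← h, ← Function.iterate_add_apply]⟩

end CCR

namespace CCR

def Dset (n : ℕ) : Finset ℕ := (2 * n).divisors.filter (fun d => ¬ d ∣ n)

def B (d : ℕ) := {O : Set (ℕ → ZMod 2) // ∃ s : ℕ → ZMod 2,
    IsLeastPeriod s d ∧ (∀ i, s (i + d / 2) = s i + 1) ∧
    O = {t | ∃ k : ℕ, ∀ i, t i = s (i + k)}}

def A (n : ℕ) := {O : Set (Fin n → ZMod 2) //
    ∃ x : Fin n → ZMod 2, O = {y | ∃ k : ℕ, (ccrNext n)^[k] x = y}}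

noncomputable def f (hn : 0 < n) (O : A n) : Σ dd : {d // d ∈ Dset n}, B dd.val :=
  ⟨⟨(main1 hn O.2.choose).choose, by
      have hspec := (main1 hn O.2.choose).choose_spec
      rw [Dset, Finset.mem_filter, Nat.mem_divisors]
      exact ⟨⟨hspec.1, by omega⟩, hspec.2.1⟩⟩,
   ⟨seqOrbit (ccrSeq n O.2.choose),
    ⟨ccrSeq n O.2.choose, (main1 hn O.2.choose).choose_spec.2.2.1,
     (main1 hn O.2.choose).choose_spec.2.2.2, rfl⟩⟩⟩

lemma sigma_eq {n : ℕ} (p q : Σ dd : {d // d ∈ Dset n}, B dd.val)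
    (h1 : p.1.val = q.1.val) (h2 : p.2.val = q.2.val) : p = q := by
  obtain ⟨⟨d1, m1⟩, ⟨O1, p1⟩⟩ := p
  obtain ⟨⟨d2, m2⟩, ⟨O2, p2⟩⟩ := q
  dsimp at h1 h2
  subst h1; subst h2
  rfl

lemma f_inj (hn : 0 < n) : Function.Injective (f hn) := by
  intro O1 O2 h
  have hsets : seqOrbit (ccrSeq n O1.2.choose) = seqOrbit (ccrSeq n O2.2.choose) :=
    congrArg (fun p => p.2.val) h
  set x1 := O1.2.choose with hx1def
  set x2 := O2.2.choose with hx2def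
  have hmem : ccrSeq n x2 ∈ seqOrbit (ccrSeq n x1) := by
    rw [hsets]; exact ⟨0, fun i => by simp⟩
  obtain ⟨k, hk⟩ := hmem
  have hx : (ccrNext n)^[k] x1 = x2 := by
    funext j
    obtain ⟨j, hj⟩ := j
    rw [state hn x1 k j hj, ← hk j]
    simpa using (state hn x2 0 j hj).symm
  have horb := stOrbit_eq_of_mem hn hx
  apply Subtype.ext
  have e1 := O1.2.choose_spec
  have e2 := O2.2.choose_spec
  rw [e1, e2]
  exact horb

lemma f_surj (hn : 0 < n) : Function.Surjective (f hn) := by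
  rintro ⟨⟨d, hd⟩, ⟨O, hO⟩⟩
  obtain ⟨s, hleast, hsd, hOeq⟩ := hO
  have hd' := hd
  rw [Dset, Finset.mem_filter, Nat.mem_divisors] at hd'
  obtain ⟨⟨hd2n, -⟩, hdn⟩ := hd'
  have hrec := rec_of_half hd2n hdn hleast.2.1 hsd
  set x : Fin n → ZMod 2 := fun j => s j with hxdef
  have hbuild : ccrSeq n x = s := build hn s hrec
  have hs2n : IsPeriodOf s (2 * n) := period_of_dvd hd2n hleast.2.1
  refine ⟨⟨{y | ∃ k : ℕ, (ccrNext n)^[k] x = y}, ⟨x, rfl⟩⟩, ?_⟩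
  set a : A n := ⟨{y | ∃ k : ℕ, (ccrNext n)^[k] x = y}, ⟨x, rfl⟩⟩ with hadef
  set x' := a.2.choose with hx'def
  have hspec : stOrbit n x = stOrbit n x' := a.2.choose_spec
  have hx'mem : x' ∈ stOrbit n x := by rw [hspec]; exact ⟨0, rfl⟩
  obtain ⟨k, hk⟩ := hx'mem
  have hs' : ccrSeq n x' = fun i => s (i + k) := by
    funext i
    rw [← hk, seq_shift hn, hbuild]
  have hleast' : IsLeastPeriod (ccrSeq n x') d := by
    rw [hs']; exact shift_least hs2n hn hleast
  have hdd : (main1 hn x').choose = d :=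
    least_unique ((main1 hn x').choose_spec.2.2.1) hleast'
  apply sigma_eq
  · exact hdd
  · show seqOrbit (ccrSeq n x') = O
    rw [hs', seqOrbit_shift hs2n hn, hOeq]
    rfl

lemma card_eq (hn : 0 < n) : Nat.card (A n) = ∑ d ∈ Dset n, SD d := by
  have hbij : Function.Bijective (f hn) := ⟨f_inj hn, f_surj hn⟩
  have hfinA : Finite (A n) := by
    have : Finite (Set (Fin n → ZMod 2)) := inferInstance
    exact Subtype.finite
  have hfinSigma : Finite (Σ dd : {d // d ∈ Dset n}, B dd.val) :=
    Finite.of_equiv _ (Equiv.ofBijective _ hbij)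
  have hfinB : ∀ dd : {d // d ∈ Dset n}, Finite (B dd.val) := fun dd =>
    Finite.of_injective _ (sigma_mk_injective (i := dd) (β := fun dd : {d // d ∈ Dset n} => B dd.val))
  rw [Nat.card_eq_of_bijective _ hbij]
  letI : ∀ dd : {d // d ∈ Dset n}, Fintype (B dd.val) := fun dd => Fintype.ofFinite _
  rw [Nat.card_eq_fintype_card, Fintype.card_sigma]
  have hcard : ∀ dd : {d // d ∈ Dset n}, Fintype.card (B dd.val) = SD dd.val := by
    intro dd
    rw [← Nat.card_eq_fintype_card]
    rfl
  calc ∑ dd : {d // d ∈ Dset n}, Fintype.card (B dd.val)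
      = ∑ dd : {d // d ∈ Dset n}, SD dd.val := by
        exact Finset.sum_congr rfl (fun dd _ => hcard dd)
    _ = ∑ d ∈ Dset n, SD d := Finset.sum_coe_sort _ _

end CCR

/-- Every cycle of the CCR of order `n` yields a binary cyclic sequence whose least
period `d` divides `2n` but not `n` and which is self-dual (shifting by the half
period complements it); consequently the number of cycles `Z*(n)` equals
`∑_{d ∣ 2n, d ∤ n} SD(d)`. -/
theorem stmt1 (n : ℕ) (hn : 0 < n) :
    (∀ x : Fin n → ZMod 2, ∃ d : ℕ, d ∣ 2 * n ∧ ¬ d ∣ n ∧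
      IsLeastPeriod (ccrSeq n x) d ∧
      (∀ i, ccrSeq n x (i + d / 2) = ccrSeq n x i + 1)) ∧
    Nat.card {O : Set (Fin n → ZMod 2) //
        ∃ x : Fin n → ZMod 2, O = {y | ∃ k : ℕ, (ccrNext n)^[k] x = y}} =
      ∑ d ∈ (2 * n).divisors.filter (fun d => ¬ d ∣ n), SD d := by
  exact ⟨CCR.main1 hn, CCR.card_eq hn⟩
end

section
/- A binary cyclic sequence S of period exactly 2k that is self-dual can be written as S = [X, X-bar] where X is a binary word of length k and X-bar is its bitwise complement. -/
lemma periodN (s : ℕ → ZMod 2) (d : ℕ) (h : IsPeriodOf s d) (n : ℕ) :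
    ∀ i, s (i + d * n) = s i := by
  induction n with
  | zero => simp
  | succ n ih =>
    intro i
    have : i + d * (n + 1) = (i + d) + d * n := by ring
    rw [this, ih, h]

lemma least_dvd (s : ℕ → ZMod 2) (d e : ℕ) (hd : IsLeastPeriod s d)
    (he : IsPeriodOf s e) : d ∣ e := by
  obtain ⟨hd0, hdp, hmin⟩ := hd
  have ht : IsPeriodOf s (e % d) := by
    intro i
    have h1 : s (i + e % d + d * (e / d)) = s (i + e % d) := periodN s d hdp _ _
    have h2 : i + e % d + d * (e / d) = i + e := by
      have := Nat.mod_add_div e d; omega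
    rw [h2] at h1
    rw [← h1, he]
  rcases Nat.eq_zero_or_pos (e % d) with h0 | hpos
  · exact Nat.dvd_of_mod_eq_zero h0
  · exact absurd (hmin _ hpos ht) (not_le.mpr (Nat.mod_lt _ hd0))

/-- A binary cyclic sequence of least period exactly `2k` that is self-dual
(its bitwise complement is a cyclic shift of it) can be written as `[X, X̄]`
for a binary word `X` of length `k`. -/
theorem stmt2 (k : ℕ) (hk : 0 < k) (s : ℕ → ZMod 2)
    (hper : IsLeastPeriod s (2 * k))
    (hsd : ∃ r : ℕ, ∀ i, s i + 1 = s (i + r)) :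
    ∃ X : ℕ → ZMod 2, (∀ i < k, s i = X i) ∧ (∀ i < k, s (i + k) = X i + 1) := by
  obtain ⟨r, hr⟩ := hsd
  -- 2r is a period
  have h2r : IsPeriodOf s (2 * r) := by
    intro i
    have h1 := hr i
    have h2 := hr (i + r)
    have heq : i + 2 * r = i + r + r := by ring
    have : s (i + 2 * r) = s i + 1 + 1 := by rw [heq, ← h2, ← h1]
    rw [this]
    have : (1 : ZMod 2) + 1 = 0 := by decide
    rw [add_assoc, this, add_zero]
  have hdvd : 2 * k ∣ 2 * r := least_dvd s _ _ hper h2r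
  have hkr : k ∣ r := (mul_dvd_mul_iff_left (two_ne_zero)).mp hdvd
  obtain ⟨m, hm⟩ := hkr
  have h2k := hper.2.1
  rcases Nat.even_or_odd m with ⟨t, ht⟩ | ⟨j, hj⟩
  · -- contradiction: r is a multiple of 2k
    exfalso
    have : s (0 + r) = s 0 := by
      have : (0 : ℕ) + r = 0 + 2 * k * t := by rw [hm, ht]; ring
      rw [this]
      exact periodN s (2 * k) h2k t 0
    have h1 := hr 0
    rw [this] at h1
    exact one_ne_zero (by linear_combination h1)
  · refine ⟨s, fun i _ => rfl, fun i _ => ?_⟩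
    have key : s (i + r) = s (i + k) := by
      have : i + r = (i + k) + 2 * k * j := by rw [hm, hj]; ring
      rw [this]
      exact periodN s (2 * k) h2k j (i + k)
    rw [← key, ← hr i]
end

section
/- Let S be a binary cyclic sequence of period k. If S has even Hamming weight, then the set D^{-1}(S) of cyclic sequences T of length k with D(T) = S consists of exactly two sequences of period k, each the complement of the other. If S has odd weight, then any cyclic sequence T of length 2k with D(T) = S, where S is viewed as a sequence of length 2k, is a self-dual sequence of period 2k. -/
/-- The difference operator `D` on binary cyclic sequences:
`D(s) i = s (i+1) - s i`. -/
def Dop (s : ℕ → ZMod 2) : ℕ → ZMod 2 := fun i => s (i + 1) - s i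

lemma dop_step {T s : ℕ → ZMod 2} (h : Dop T = s) (n : ℕ) :
    T (n + 1) = T n + s n := by
  have := congrFun h n
  simp only [Dop] at this
  linear_combination this

lemma tel {T s : ℕ → ZMod 2} (h : Dop T = s) (i m : ℕ) :
    T (i + m) = T i + ∑ j ∈ Finset.range m, s (i + j) := by
  induction m with
  | zero => simp
  | succ m ih =>
    have : i + (m + 1) = (i + m) + 1 := by ring
    rw [this, dop_step h, ih, Finset.sum_range_succ]
    ring

lemma window {s : ℕ → ZMod 2} {k : ℕ} (hper : ∀ i, s (i + k) = s i) (i : ℕ) :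
    ∑ j ∈ Finset.range k, s (i + j) = ∑ j ∈ Finset.range k, s j := by
  induction i with
  | zero => simp
  | succ i ih =>
    have h1 : ∑ j ∈ Finset.range (k + 1), s (i + j)
        = (∑ j ∈ Finset.range k, s (i + j)) + s (i + k) :=
      Finset.sum_range_succ _ _
    have h2 : ∑ j ∈ Finset.range (k + 1), s (i + j)
        = (∑ j ∈ Finset.range k, s (i + 1 + j)) + s i := by
      rw [Finset.sum_range_succ']
      simp only [Nat.add_zero]
      congr 1
      apply Finset.sum_congr rfl
      intro j _
      congr 1
      ring
    have h3 : s (i + k) = s i := hper i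
    have : ∑ j ∈ Finset.range k, s (i + 1 + j)
        = ∑ j ∈ Finset.range k, s (i + j) := by
      linear_combination h1 - h2 + h3
    rw [this, ih]

lemma shift_sum {T s : ℕ → ZMod 2} {k : ℕ} (h : Dop T = s)
    (hper : ∀ i, s (i + k) = s i) (i : ℕ) :
    T (i + k) = T i + ∑ j ∈ Finset.range k, s j := by
  rw [tel h i k, window hper]

/-- Let `s` be a binary cyclic sequence of period `k`.
If `s` has even Hamming weight on a period (sum `0` in `GF(2)`), then the
preimage `D⁻¹(s)` among `k`-periodic sequences consists of exactly two
sequences, each the complement of the other.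
If `s` has odd weight (sum `1`), then every `2k`-periodic sequence `T` with
`D(T) = s` is a self-dual sequence of period `2k`, i.e. shifting `T` by `k`
complements every bit. -/
theorem stmt3 (k : ℕ) (hk : 0 < k) (s : ℕ → ZMod 2)
    (hper : ∀ i, s (i + k) = s i) :
    ((∑ i ∈ Finset.range k, s i = 0) →
      Nat.card {T : ℕ → ZMod 2 // (∀ i, T (i + k) = T i) ∧ Dop T = s} = 2 ∧
      (∀ T T' : ℕ → ZMod 2,
        (∀ i, T (i + k) = T i) → Dop T = s →
        (∀ i, T' (i + k) = T' i) → Dop T' = s →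
        T' ≠ T → ∀ i, T' i = T i + 1)) ∧
    ((∑ i ∈ Finset.range k, s i = 1) →
      ∀ T : ℕ → ZMod 2, (∀ i, T (i + 2 * k) = T i) → Dop T = s →
        ∀ i, T (i + k) = T i + 1) := by
  constructor
  · intro hsum
    constructor
    · -- cardinality is 2
      have e : {T : ℕ → ZMod 2 // (∀ i, T (i + k) = T i) ∧ Dop T = s} ≃ ZMod 2 :=
        { toFun := fun T => T.1 0
          invFun := fun c =>
            ⟨fun n => c + ∑ i ∈ Finset.range n, s i, by
              have hD : Dop (fun n => c + ∑ i ∈ Finset.range n, s i) = s := by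
                funext n
                simp only [Dop, Finset.sum_range_succ]
                ring
              refine ⟨fun i => ?_, hD⟩
              have := shift_sum hD hper i
              simpa [hsum] using this⟩
          left_inv := by
            rintro ⟨T, hTper, hTD⟩
            ext n
            have := tel hTD 0 n
            simpa using this.symm
          right_inv := by
            intro c
            simp }
      rw [Nat.card_congr e]
      simp [Nat.card_eq_fintype_card]
    · -- complement
      intro T T' hTper hTD hT'per hT'D hne i
      have hT : T i = T 0 + ∑ j ∈ Finset.range i, s j := by
        have := tel hTD 0 i; simpa using this
      have hT' : T' i = T' 0 + ∑ j ∈ Finset.range i, s j := by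
        have := tel hT'D 0 i; simpa using this
      have h0 : T' 0 ≠ T 0 := by
        intro h0
        apply hne
        funext n
        have h1 := tel hTD 0 n
        have h2 := tel hT'D 0 n
        simp only [Nat.zero_add] at h1 h2
        rw [h2, h1, h0]
      have h01 : T' 0 = T 0 + 1 := by
        have key : ∀ a b : ZMod 2, a ≠ b → a = b + 1 := by decide
        exact key _ _ h0
      rw [hT, hT', h01]
      ring
  · intro hsum T _hTper hTD i
    rw [shift_sum hTD hper i, hsum]
end

section
/- Let S = [X, Y] be a binary sequence of period 2^{n+1} with X, Y words of length 2^n. Then every cyclic sequence T of length 2^{n+2} satisfying D^{2^n}(T) = S has the form T = [Z, X+Z, X+Y+Z, Y+Z] for some binary word Z of length 2^n, and replacing Z by Z+X+Y gives the same cyclic sequence, so there are exactly 2^{2^n - 1} distinct such cyclic sequences. -/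
/-!
In characteristic 2 the `2^n`-fold difference is `D^{2^n} T = T(· + 2^n) + T`, so `D^{2^n} T = S`
is the recursion `T(i + 2^n) = S i + T i`: a solution is determined by its first block `Z`, every
block `Z` occurs, and the four blocks are `Z, X+Z, X+Y+Z, Y+Z`. A shift `T(· + k)` of a solution is
again a solution exactly when `k` is a period of `S`, i.e. a multiple of `2^{n+1}`; modulo the
period `2^{n+2}` of `T` the only nontrivial such shift replaces `Z` by `X+Y+Z`. Since `X ≠ Y`
(otherwise `S` would have period `2^n`), choosing `j` with `X j ≠ Y j`, every shift class contains
exactly one solution with `T j = 0`, and there are `2^{2^n - 1}` of those.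
-/

open Function

theorem Function.Periodic.of_forall_lt {α : Type*} {f : ℕ → α} {p c : ℕ} (hf : Periodic f p)
    (hp : 0 < p) (h : ∀ i < p, f (i + c) = f i) : Periodic f c := fun i =>
  calc f (i + c) = f (i % p + c) := ((hf.add_const c).map_mod_nat i).symm
    _ = f (i % p) := h _ (Nat.mod_lt i hp)
    _ = f i := hf.map_mod_nat i

theorem IsLeastPeriod.periodic {S : ℕ → ZMod 2} {d : ℕ} (hd : IsLeastPeriod S d) :
    Periodic S d :=
  hd.2.1

theorem IsLeastPeriod.dvd {S : ℕ → ZMod 2} {d e : ℕ} (hd : IsLeastPeriod S d)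
    (he : Periodic S e) : d ∣ e := by
  have hdS := hd.periodic
  obtain ⟨hd0, -, hmin⟩ := hd
  have hmod : Periodic S (e % d) := fun i => by
    rw [← (hdS.nat_mul (e / d)) (i + e % d), add_assoc, Nat.cast_id, mul_comm, Nat.mod_add_div, he]
  by_contra hnd
  have hpos : 0 < e % d := Nat.pos_of_ne_zero (mt Nat.dvd_of_mod_eq_zero hnd)
  exact (Nat.mod_lt e hd0).not_ge (hmin _ hpos hmod)

theorem Nat.card_subtype_apply_eq {ι β : Type*} [Fintype ι] [DecidableEq ι] [Fintype β]
    [DecidableEq β] (i : ι) (b : β) :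
    Nat.card {f : ι → β // f i = b} = Nat.card β ^ (Nat.card ι - 1) := by
  rw [Nat.card_eq_fintype_card, Fintype.card_subtype, ← Fintype.piFinset_univ,
    Fintype.card_filter_piFinset_const_eq_of_mem _ _ (Finset.mem_univ b)]
  simp

def shiftOrbit {α : Type*} (T : ℕ → α) : Set (ℕ → α) := {T' | ∃ k : ℕ, ∀ i, T' i = T (i + k)}

theorem shiftOrbit_comp_add {α : Type*} {T : ℕ → α} {c d : ℕ} (hT : Periodic T (c + d)) :
    shiftOrbit (fun i => T (i + c)) = shiftOrbit T := by
  ext T'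
  constructor
  · rintro ⟨k, hk⟩
    exact ⟨k + c, fun i => by rw [hk]; simp only [add_assoc]⟩
  · rintro ⟨k, hk⟩
    refine ⟨k + d, fun i => ?_⟩
    show T' i = T (i + (k + d) + c)
    rw [hk, ← hT]
    congr 1
    ring

theorem Dop_iterate_two_pow_apply (k : ℕ) (T : ℕ → ZMod 2) (i : ℕ) :
    Dop^[2 ^ k] T i = T (i + 2 ^ k) + T i := by
  induction k generalizing T i with
  | zero => exact CharTwo.sub_eq_add (T (i + 1)) (T i)
  | succ k ih =>
    rw [pow_succ, mul_two, iterate_add_apply, ih, ih, ih, ← Nat.add_assoc]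
    linear_combination CharTwo.add_self_eq_zero (T (i + 2 ^ k))

/-- `T` solves `D^N T = S` when `N` is a power of two (`Dop_iterate_two_pow_eq_iff`). -/
def IsLift (N : ℕ) (S T : ℕ → ZMod 2) : Prop := ∀ i, T (i + N) = S i + T i

theorem Dop_iterate_two_pow_eq_iff {k : ℕ} {S T : ℕ → ZMod 2} :
    Dop^[2 ^ k] T = S ↔ IsLift (2 ^ k) S T := by
  simp only [funext_iff, Dop_iterate_two_pow_apply, IsLift]
  refine forall_congr' fun i => ?_
  rw [← CharTwo.sub_eq_add (S i) (T i), eq_sub_iff_add_eq]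

section Lifts

variable {N : ℕ} {S T T' : ℕ → ZMod 2}

theorem IsLift.eq_of_forall_lt (hN : 0 < N) (hT : IsLift N S T) (hT' : IsLift N S T')
    (h : ∀ i < N, T i = T' i) : T = T' := by
  funext i
  induction i using Nat.strong_induction_on with
  | _ i ih =>
    rcases lt_or_ge i N with hi | hi
    · exact h i hi
    · obtain ⟨m, rfl⟩ := Nat.exists_eq_add_of_le' hi
      rw [hT, hT', ih m (by omega)]

theorem IsLift.comp_add (hT : IsLift N S T) {k : ℕ} (hk : Periodic S k) :
    IsLift N S (fun i => T (i + k)) := fun i => by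
  simp only
  rw [add_right_comm, hT, hk]

theorem IsLift.periodic_of_comp_add (hT : IsLift N S T) {k : ℕ}
    (hTk : IsLift N S (fun i => T (i + k))) : Periodic S k := fun i => by
  have h := hTk i
  simp only at h
  rw [add_right_comm, hT] at h
  exact add_right_cancel h

theorem IsLift.add_two_mul (hT : IsLift N S T) (i : ℕ) :
    T (i + 2 * N) = S (i + N) + S i + T i := by
  rw [two_mul, ← add_assoc, hT, hT, add_assoc]

theorem IsLift.periodic (hT : IsLift N S T) (hS : Periodic S (2 * N)) :
    Periodic T (2 * N + 2 * N) := fun i => by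
  rw [← add_assoc, hT.add_two_mul, hT.add_two_mul, hS, add_right_comm i, hS]
  linear_combination CharTwo.add_self_eq_zero (S (i + N) + S i)

def liftSeq (N : ℕ) (S Z : ℕ → ZMod 2) : ℕ → ZMod 2 :=
  fun i => Z (i % N) + ∑ t ∈ Finset.range (i / N), S (i % N + t * N)

theorem liftSeq_of_lt (S Z : ℕ → ZMod 2) {i : ℕ} (hi : i < N) : liftSeq N S Z i = Z i := by
  simp [liftSeq, Nat.mod_eq_of_lt hi, Nat.div_eq_of_lt hi]

theorem isLift_liftSeq (hN : 0 < N) (S Z : ℕ → ZMod 2) : IsLift N S (liftSeq N S Z) := fun i => by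
  rw [liftSeq, liftSeq, Nat.add_mod_right, Nat.add_div_right _ hN, Finset.sum_range_succ,
    Nat.mod_add_div' i N]
  ring

def liftEquiv (hN : 0 < N) (S : ℕ → ZMod 2) : {T // IsLift N S T} ≃ (Fin N → ZMod 2) where
  toFun T r := T.1 r
  invFun Z := ⟨liftSeq N S (fun i => if h : i < N then Z ⟨i, h⟩ else 0), isLift_liftSeq hN _ _⟩
  left_inv T := by
    apply Subtype.ext
    dsimp only
    refine (isLift_liftSeq hN S _).eq_of_forall_lt hN T.2 fun i hi => ?_
    rw [liftSeq_of_lt _ _ hi, dif_pos hi]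
  right_inv Z := funext fun r => by simp [liftSeq_of_lt _ _ r.2]

theorem IsLift.eq_or_eq_of_mem_shiftOrbit (hS : IsLeastPeriod S (2 * N)) (hT : IsLift N S T)
    (hT' : IsLift N S T') (h : T' ∈ shiftOrbit T) : T' = T ∨ T' = fun i => T (i + 2 * N) := by
  obtain ⟨k, hk⟩ := h
  obtain rfl : T' = fun i => T (i + k) := funext hk
  obtain ⟨m, rfl⟩ := hS.dvd (hT.periodic_of_comp_add hT')
  have hTper := hT.periodic hS.periodic
  rcases Nat.even_or_odd' m with ⟨t, rfl | rfl⟩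
  · left
    funext i
    rw [show i + 2 * N * (2 * t) = i + t * (2 * N + 2 * N) by ring]
    exact hTper.nat_mul t i
  · right
    funext i
    rw [show i + 2 * N * (2 * t + 1) = i + 2 * N + t * (2 * N + 2 * N) by ring]
    exact hTper.nat_mul t _

end Lifts

section Blocks

variable {N : ℕ} {S T X Y : ℕ → ZMod 2}

theorem exists_ne_of_isLeastPeriod (hS : IsLeastPeriod S (2 * N)) (hSX : ∀ i < N, S i = X i)
    (hSY : ∀ i < N, S (i + N) = Y i) : ∃ j < N, X j ≠ Y j := by
  by_contra! hXY
  have hper := hS.periodic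
  obtain ⟨h2N, -, hmin⟩ := hS
  have hN : Periodic S N := hper.of_forall_lt h2N fun i hi => by
    rcases lt_or_ge i N with hiN | hiN
    · rw [hSY i hiN, hSX i hiN, hXY i hiN]
    · obtain ⟨m, rfl⟩ := Nat.exists_eq_add_of_le' hiN
      rw [add_assoc, ← two_mul, hper, hSX m (by omega), hSY m (by omega), hXY m (by omega)]
  have := hmin N (by omega) hN
  omega

theorem IsLift.add_of_lt (hT : IsLift N S T) (hSX : ∀ i < N, S i = X i) {i : ℕ} (hi : i < N) :
    T (i + N) = X i + T i := by
  rw [hT, hSX i hi]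

theorem IsLift.add_two_mul_of_lt (hT : IsLift N S T) (hSX : ∀ i < N, S i = X i)
    (hSY : ∀ i < N, S (i + N) = Y i) {i : ℕ} (hi : i < N) :
    T (i + 2 * N) = X i + Y i + T i := by
  rw [hT.add_two_mul, hSY i hi, hSX i hi, add_comm (Y i)]

theorem IsLift.add_three_mul_of_lt (hT : IsLift N S T) (hS : Periodic S (2 * N))
    (hSX : ∀ i < N, S i = X i) (hSY : ∀ i < N, S (i + N) = Y i) {i : ℕ} (hi : i < N) :
    T (i + 3 * N) = Y i + T i := by
  rw [show i + 3 * N = i + 2 * N + N by ring, hT, hS, hSX i hi, hT.add_two_mul_of_lt hSX hSY hi]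
  linear_combination CharTwo.add_self_eq_zero (X i)

theorem IsLift.eq_comp_add_two_mul (hN : 0 < N) (hS : Periodic S (2 * N))
    (hSX : ∀ i < N, S i = X i) (hSY : ∀ i < N, S (i + N) = Y i) (hT : IsLift N S T)
    {T' : ℕ → ZMod 2} (hT' : IsLift N S T') (h : ∀ i < N, T' i = T i + X i + Y i) :
    T' = fun i => T (i + 2 * N) :=
  hT'.eq_of_forall_lt hN (hT.comp_add hS) fun i hi => by
    rw [h i hi, hT.add_two_mul_of_lt hSX hSY hi]
    ring

theorem IsLift.exists_shiftOrbit_eq (hS : IsLeastPeriod S (2 * N)) (hSX : ∀ i < N, S i = X i)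
    (hSY : ∀ i < N, S (i + N) = Y i) {j : ℕ} (hj : j < N) (hXY : X j ≠ Y j)
    (hT : IsLift N S T) : ∃ T', IsLift N S T' ∧ T' j = 0 ∧ shiftOrbit T' = shiftOrbit T := by
  by_cases h0 : T j = 0
  · exact ⟨T, hT, h0, rfl⟩
  refine ⟨fun i => T (i + 2 * N), hT.comp_add hS.periodic, ?_,
    shiftOrbit_comp_add (hT.periodic hS.periodic)⟩
  have key : ∀ a b c : ZMod 2, a ≠ b → c ≠ 0 → a + b + c = 0 := by decide
  exact (hT.add_two_mul_of_lt hSX hSY hj).trans (key _ _ _ hXY h0)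

theorem card_shiftOrbits (hS : IsLeastPeriod S (2 * N)) (hSX : ∀ i < N, S i = X i)
    (hSY : ∀ i < N, S (i + N) = Y i) :
    Nat.card {O : Set (ℕ → ZMod 2) // ∃ T, IsLift N S T ∧ O = shiftOrbit T} = 2 ^ (N - 1) := by
  obtain ⟨j, hj, hXY⟩ := exists_ne_of_isLeastPeriod hS hSX hSY
  have hN : 0 < N := by have := hS.1; omega
  let orbit : {T : {T // IsLift N S T} // T.1 j = 0} →
      {O : Set (ℕ → ZMod 2) // ∃ T, IsLift N S T ∧ O = shiftOrbit T} :=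
    fun T => ⟨shiftOrbit T.1.1, T.1.1, T.1.2, rfl⟩
  have horbit : Bijective orbit := by
    constructor
    · rintro ⟨⟨T, hT⟩, hTj⟩ ⟨⟨T', hT'⟩, hT'j⟩ h
      have hO : shiftOrbit T = shiftOrbit T' := congrArg Subtype.val h
      have hmem : T' ∈ shiftOrbit T := hO ▸ ⟨0, fun _ => rfl⟩
      rcases hT.eq_or_eq_of_mem_shiftOrbit hS hT' hmem with rfl | rfl
      · rfl
      · refine absurd ?_ hXY
        have hTj : T j = 0 := hTj
        simp only [hT.add_two_mul_of_lt hSX hSY hj, hTj, add_zero] at hT'j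
        exact CharTwo.add_eq_zero.1 hT'j
    · rintro ⟨O, T, hT, rfl⟩
      obtain ⟨T', hT', hT'j, hO⟩ := hT.exists_shiftOrbit_eq hS hSX hSY hj hXY
      exact ⟨⟨⟨T', hT'⟩, hT'j⟩, Subtype.ext hO⟩
  rw [← Nat.card_eq_of_bijective orbit horbit,
    Nat.card_congr ((liftEquiv hN S).subtypeEquiv (p := fun T => T.1 j = 0)
      (q := fun Z => Z ⟨j, hj⟩ = 0) fun T => Iff.rfl)]
  exact (Nat.card_subtype_apply_eq (ι := Fin N) (β := ZMod 2) ⟨j, hj⟩ 0).trans (by simp)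

end Blocks

/-- Let `S = [X, Y]` be a binary sequence of (least) period `2^{n+1}` with `X, Y`
words of length `2^n`.  Every `2^{n+2}`-periodic sequence `T` with
`D^{2^n}(T) = S` has the form `T = [Z, X+Z, X+Y+Z, Y+Z]` for some binary word
`Z` of length `2^n`; replacing `Z` by `Z+X+Y` gives the same cyclic sequence
(a cyclic shift); and there are exactly `2^{2^n - 1}` distinct cyclic sequences
(shift-orbits) obtained this way. -/
theorem stmt4 (n : ℕ) (X Y S : ℕ → ZMod 2)
    (hSper : IsLeastPeriod S (2 ^ (n + 1)))
    (hSX : ∀ i < 2 ^ n, S i = X i)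
    (hSY : ∀ i < 2 ^ n, S (i + 2 ^ n) = Y i) :
    (∀ T : ℕ → ZMod 2, (∀ i, T (i + 2 ^ (n + 2)) = T i) → Dop^[2 ^ n] T = S →
      ∃ Z : ℕ → ZMod 2, ∀ i < 2 ^ n,
        T i = Z i ∧ T (i + 2 ^ n) = X i + Z i ∧
        T (i + 2 * 2 ^ n) = X i + Y i + Z i ∧ T (i + 3 * 2 ^ n) = Y i + Z i) ∧
    (∀ T T' : ℕ → ZMod 2,
      (∀ i, T (i + 2 ^ (n + 2)) = T i) → Dop^[2 ^ n] T = S →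
      (∀ i, T' (i + 2 ^ (n + 2)) = T' i) → Dop^[2 ^ n] T' = S →
      (∀ i < 2 ^ n, T' i = T i + X i + Y i) →
      (∃ k : ℕ, ∀ i, T' i = T (i + k))) ∧
    Nat.card {O : Set (ℕ → ZMod 2) // ∃ T : ℕ → ZMod 2,
        (∀ i, T (i + 2 ^ (n + 2)) = T i) ∧ Dop^[2 ^ n] T = S ∧
        O = {T' | ∃ k : ℕ, ∀ i, T' i = T (i + k)}} = 2 ^ (2 ^ n - 1) := by
  rw [pow_succ'] at hSper
  have hS := hSper.periodic
  have hper (T : ℕ → ZMod 2) (hT : IsLift (2 ^ n) S T) : Periodic T (2 ^ (n + 2)) := by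
    rw [show 2 ^ (n + 2) = 2 * 2 ^ n + 2 * 2 ^ n by ring]
    exact hT.periodic hS
  simp only [Dop_iterate_two_pow_eq_iff]
  refine ⟨fun T _ hT => ⟨T, fun i hi => ⟨rfl, hT.add_of_lt hSX hi,
      hT.add_two_mul_of_lt hSX hSY hi, hT.add_three_mul_of_lt hS hSX hSY hi⟩⟩,
    fun T T' _ hT _ hT' h => ⟨2 * 2 ^ n, congrFun (hT.eq_comp_add_two_mul
      (Nat.two_pow_pos n) hS hSX hSY hT' h)⟩, ?_⟩
  rw [← card_shiftOrbits hSper hSX hSY]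
  exact Nat.card_congr <| Equiv.subtypeEquivRight fun O =>
    ⟨fun ⟨T, _, hT, hO⟩ => ⟨T, hT, hO⟩, fun ⟨T, hT, hO⟩ => ⟨T, hper T hT, hT, hO⟩⟩
end

section
/- Let X be a binary word of length 2^n and S = [X, X-bar] a self-dual sequence of length 2^{n+1}. Then D^{-2^n}(S), the set of length-2^{n+2} sequences T with D^{2^n}(T) = S, consists exactly of the sequences [Z, X+Z, Z-bar, X + Z-bar] over all binary words Z of length 2^n, and each such sequence is self-dual of length 2^{n+2}. -/
/-- Extension lemma: a property holding on `[0,p)` and stable under `+p` holds everywhere. -/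
lemma ext_all (p : ℕ) (hp : 0 < p) (Q : ℕ → Prop)
    (h0 : ∀ i < p, Q i) (hs : ∀ i, Q i → Q (i + p)) : ∀ i, Q i := by
  intro i
  induction i using Nat.strong_induction_on with
  | _ i ih =>
    rcases lt_or_ge i p with h | h
    · exact h0 i h
    · have := hs (i - p) (ih (i - p) (by omega))
      rwa [Nat.sub_add_cancel h] at this

lemma Dop_iter_pow : ∀ (k : ℕ) (T : ℕ → ZMod 2) (i : ℕ),
    Dop^[2 ^ k] T i = T (i + 2 ^ k) + T i := by
  intro k
  induction k with
  | zero =>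
      intro T i
      have : ∀ a b : ZMod 2, a - b = a + b := by decide
      simpa [Dop] using this (T (i + 1)) (T i)
  | succ k ih =>
      intro T i
      have e : 2 ^ (k + 1) = 2 ^ k + 2 ^ k := by rw [pow_succ]; ring
      have key : ∀ a b c : ZMod 2, (a + b) + (b + c) = a + c := by decide
      rw [e, Function.iterate_add_apply, ih, ih, ih]
      rw [key]
      have : i + 2 ^ k + 2 ^ k = i + (2 ^ k + 2 ^ k) := by ring
      rw [this]


/-- Let `X` be a binary word of length `2^n` and `S = [X, X̄]` the corresponding
self-dual sequence of length `2^{n+1}`.  Then the `2^{n+2}`-periodic preimages of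
`S` under `D^{2^n}` are exactly the sequences `[Z, X+Z, Z̄, X+Z̄]` over all binary
words `Z` of length `2^n`, and each of these is self-dual of length `2^{n+2}`
(shifting by `2^{n+1}` complements it). -/
theorem stmt5 (n : ℕ) (X S : ℕ → ZMod 2)
    (hSper : ∀ i, S (i + 2 ^ (n + 1)) = S i)
    (hSX : ∀ i < 2 ^ n, S i = X i ∧ S (i + 2 ^ n) = X i + 1) :
    (∀ T : ℕ → ZMod 2, (∀ i, T (i + 2 ^ (n + 2)) = T i) →
      (Dop^[2 ^ n] T = S ↔
        ∃ Z : ℕ → ZMod 2, ∀ i < 2 ^ n,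
          T i = Z i ∧ T (i + 2 ^ n) = X i + Z i ∧
          T (i + 2 * 2 ^ n) = Z i + 1 ∧ T (i + 3 * 2 ^ n) = X i + Z i + 1)) ∧
    (∀ T : ℕ → ZMod 2, (∀ i, T (i + 2 ^ (n + 2)) = T i) → Dop^[2 ^ n] T = S →
      ∀ i, T (i + 2 ^ (n + 1)) = T i + 1) := by
  set p := 2 ^ n with hp
  have hp0 : 0 < p := by positivity
  have e1 : 2 ^ (n + 1) = 2 * p := by rw [pow_succ, hp]; ring
  have e2 : 2 ^ (n + 2) = 4 * p := by rw [pow_succ, pow_succ, hp]; ring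
  rw [e1] at hSper
  -- complementarity of S: S (i + p) + S i = 1 for all i
  have hf : ∀ i, S (i + p) + S i = 1 := by
    apply ext_all p hp0
    · intro i hi
      obtain ⟨h1, h2⟩ := hSX i hi
      rw [h1, h2]
      have : ∀ x : ZMod 2, x + 1 + x = 1 := by decide
      exact this _
    · intro i hQ
      have e : i + p + p = i + 2 * p := by ring
      rw [e, hSper i]
      have : ∀ a b : ZMod 2, a + b = 1 → b + a = 1 := by decide
      exact this _ _ hQ
  -- self-duality of any preimage
  have sd : ∀ T : ℕ → ZMod 2, (∀ i, T (i + 4 * p) = T i) →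
      (∀ i, T (i + p) + T i = S i) → ∀ i, T (i + 2 * p) = T i + 1 := by
    intro T _ hD i
    have a := hD (i + p)
    have b := hD i
    have c := hf i
    have e : i + p + p = i + 2 * p := by ring
    rw [e] at a
    have key : ∀ x y z u v : ZMod 2, x + y = u → y + z = v → u + v = 1 → x = z + 1 := by decide
    exact key _ _ _ _ _ a b c
  constructor
  · intro T hTper
    rw [e2] at hTper
    constructor
    · intro hD
      have hD' : ∀ i, T (i + p) + T i = S i := by
        intro i
        rw [← Dop_iter_pow n T i, ← hp, hD]
      refine ⟨T, fun i hi => ?_⟩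
      obtain ⟨h1, h2⟩ := hSX i hi
      have key2 : ∀ x y s : ZMod 2, x + y = s → x = s + y := by decide
      refine ⟨rfl, ?_, ?_, ?_⟩
      · have := hD' i; rw [h1] at this; exact key2 _ _ _ this
      · exact sd T hTper hD' i
      · have e : i + 3 * p = (i + p) + 2 * p := by ring
        rw [e, sd T hTper hD' (i + p)]
        have := hD' i; rw [h1] at this
        rw [key2 _ _ _ this]
    · rintro ⟨Z, hZ⟩
      funext i
      rw [Dop_iter_pow n T i, ← hp]
      revert i
      apply ext_all (4 * p) (by omega)
      · intro i hi
        rcases show i < p ∨ (p ≤ i ∧ i < 2 * p) ∨ (2 * p ≤ i ∧ i < 3 * p) ∨ 3 * p ≤ i by omega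
          with h | h | h | h
        · obtain ⟨h1, h2, _, _⟩ := hZ i h
          rw [h1, h2, (hSX i h).1]
          have : ∀ x z : ZMod 2, x + z + z = x := by decide
          exact this _ _
        · obtain ⟨j, rfl⟩ : ∃ j, i = j + p := ⟨i - p, by omega⟩
          obtain ⟨_, h2, h3, _⟩ := hZ j (by omega)
          have e : j + p + p = j + 2 * p := by ring
          rw [e, h2, h3, (hSX j (by omega)).2]
          have : ∀ x z : ZMod 2, z + 1 + (x + z) = x + 1 := by decide
          exact this _ _
        · obtain ⟨j, rfl⟩ : ∃ j, i = j + 2 * p := ⟨i - 2 * p, by omega⟩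
          obtain ⟨_, _, h3, h4⟩ := hZ j (by omega)
          have e : j + 2 * p + p = j + 3 * p := by ring
          rw [e, h3, h4, hSper j, (hSX j (by omega)).1]
          have : ∀ x z : ZMod 2, x + z + 1 + (z + 1) = x := by decide
          exact this _ _
        · obtain ⟨j, rfl⟩ : ∃ j, i = j + 3 * p := ⟨i - 3 * p, by omega⟩
          obtain ⟨h1, _, _, h4⟩ := hZ j (by omega)
          have e : j + 3 * p + p = j + 4 * p := by ring
          have e' : j + 3 * p = (j + p) + 2 * p := by ring
          rw [e, hTper j, h1, h4, e', hSper (j + p), (hSX j (by omega)).2]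
          have : ∀ x z : ZMod 2, z + (x + z + 1) = x + 1 := by decide
          exact this _ _
      · intro i hQ
        have eS : i + 4 * p = (i + 2 * p) + 2 * p := by ring
        have eT : i + 4 * p + p = (i + p) + 4 * p := by ring
        rw [eT, hTper (i + p), eS, hSper (i + 2 * p), hSper i, ← eS, hTper i]
        exact hQ
  · intro T hTper hD
    rw [e2] at hTper
    have hD' : ∀ i, T (i + p) + T i = S i := by
      intro i
      rw [← Dop_iter_pow n T i, ← hp, hD]
    intro i
    rw [e1]
    exact sd T hTper hD' i
end

section
/- In any single-track Gray code of length n and period P (a cyclic list of P distinct binary words of length n such that consecutive words, including last-to-first, differ in exactly one coordinate, and each coordinate track is a cyclic shift of a fixed track), 2n divides P. -/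
/-- In a single-track Gray code of length `n` and period `P` — a cyclic list of
`P` distinct binary words of length `n` in which consecutive words (cyclically)
differ in exactly one coordinate, and each coordinate track is a cyclic shift of
a common track — `2n` divides `P`. -/
theorem stmt6 (n P : ℕ) (hn : 0 < n) (hP : 0 < P)
    (w : ℕ → Fin n → ZMod 2)
    (hper : ∀ k, w (k + P) = w k)
    (hdist : ∀ k l, k < P → l < P → w k = w l → k = l)
    (hgray : ∀ k, Nat.card {i : Fin n // w (k + 1) i ≠ w k i} = 1)
    (htrack : ∃ t : ℕ → ZMod 2, (∀ k, t (k + P) = t k) ∧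
      ∃ off : Fin n → ℕ, ∀ k i, w k i = t (k + off i)) :
    2 * n ∣ P := by
  classical
  obtain ⟨t, htper, off, hoff⟩ := htrack
  haveI : NeZero P := ⟨hP.ne'⟩
  have hq : ∀ q r, t (r + P * q) = t r := by
    intro q
    induction q with
    | zero => simp
    | succ q ih => intro r; rw [Nat.mul_succ, ← Nat.add_assoc, htper, ih]
  have hmod : ∀ a, t a = t (a % P) := by
    intro a
    conv_lhs => rw [← Nat.mod_add_div a P]
    exact hq _ _
  set T : ZMod P → ZMod 2 := fun x => t x.val with hTdef
  have hT : ∀ a : ℕ, T (a : ZMod P) = t a := by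
    intro a
    simp only [hTdef, ZMod.val_natCast]
    exact (hmod a).symm
  set p : ZMod P → Prop := fun x => T (x + 1) ≠ T x with hpdef
  set C : ℕ := (Finset.univ.filter p).card with hCdef
  -- gray condition in terms of p
  have hgray' : ∀ x : ZMod P, (Finset.univ.filter (fun i : Fin n => p (x + off i))).card = 1 := by
    intro x
    have hx : ((x.val : ℕ) : ZMod P) = x := by simp [ZMod.natCast_val, ZMod.cast_id]
    have := hgray x.val
    rw [Nat.card_eq_fintype_card, Fintype.card_subtype] at this
    rw [← this]
    congr 1
    ext i
    have e1 : T (x + off i + 1) = t (x.val + 1 + off i) := by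
      rw [← hT (x.val + 1 + off i)]; congr 1; push_cast [hx]; ring
    have e2 : T (x + off i) = t (x.val + off i) := by
      rw [← hT (x.val + off i)]; congr 1; push_cast [hx]; ring
    simp [hpdef, hoff, e1, e2]
  -- shift invariance of counting
  have hshift : ∀ c : ZMod P,
      (∑ x : ZMod P, if p (x + c) then (1:ℕ) else 0) = C := by
    intro c
    rw [hCdef, Finset.card_filter]
    exact Fintype.sum_equiv (Equiv.addRight c) _ _ (fun x => rfl)
  -- double counting: P = n * C
  have hPnC : P = n * C := by
    have h1 : (∑ x : ZMod P, ∑ i : Fin n, if p (x + off i) then (1:ℕ) else 0) = P := by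
      have : ∀ x : ZMod P, (∑ i : Fin n, if p (x + off i) then (1:ℕ) else 0) = 1 := by
        intro x
        rw [← Finset.card_filter]
        exact hgray' x
      simp [this, ZMod.card]
    rw [Finset.sum_comm] at h1
    have h2 : ∀ i : Fin n, (∑ x : ZMod P, if p (x + off i) then (1:ℕ) else 0) = C :=
      fun i => hshift (off i)
    simp only [h2, Finset.sum_const, Finset.card_univ, Fintype.card_fin, smul_eq_mul] at h1
    omega
  -- parity: C is even
  have hCeven : 2 ∣ C := by
    have key : ∀ a b : ZMod 2, a + b = if a ≠ b then 1 else 0 := by decide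
    have hsum : (∑ x : ZMod P, (T (x + 1) + T x)) = 0 := by
      rw [Finset.sum_add_distrib]
      have : (∑ x : ZMod P, T (x + 1)) = ∑ x : ZMod P, T x :=
        Fintype.sum_equiv (Equiv.addRight 1) _ _ (fun x => rfl)
      rw [this]
      have : ∀ a : ZMod 2, a + a = 0 := by decide
      exact this _
    have hsum2 : ((C : ZMod 2)) = 0 := by
      rw [hCdef]
      rw [← hsum]
      rw [Finset.card_filter]
      push_cast
      apply Finset.sum_congr rfl
      intro x _
      rw [key (T (x + 1)) (T x)]
    exact (ZMod.natCast_eq_zero_iff C 2).mp hsum2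
  obtain ⟨d, hd⟩ := hCeven
  exact ⟨d, by rw [hPnC, hd]; ring⟩
end

section
/- If S = [X, Y, X-bar, Y-bar] is a binary self-dual sequence of length 4n generated by CCR_{2n} (with X, Y of length n), then Delta_n(S) = [X+Y, Y+X-bar] is a self-dual sequence of length 2n generated by CCR_n. Conversely, if [X, X-bar] is a self-dual sequence of length 2n, then for any binary word Y of length n, Delta_n^{-1} applied to [X, X-bar] yields [Y, X+Y, Y-bar, X+Y-bar], which is a self-dual sequence of length 4n. -/
/-!
Over `GF(2)` a self-dual sequence `S (i + k) = S i + 1` is automatically `2k`-periodic, and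
`Δ_n S (i + n) = S (i + 2n) + S (i + n)`, so self-duality of `S` at shift `2n` turns into
self-duality of `Δ_n S` at shift `n`. For the converse, the shift by `2n` must only be checked
on the first two blocks of `T`: the other two follow by `4n`-periodicity.
-/

/-- The block-difference operator `Δ_m`: `(Δ_m S) i = S (i + m) + S i`. -/
def blockDelta (m : ℕ) (S : ℕ → ZMod 2) : ℕ → ZMod 2 := fun i => S (i + m) + S i

/-- `S` is self-dual of length `2 * k`, read as an infinite sequence. -/
def IsSelfDual (k : ℕ) (S : ℕ → ZMod 2) : Prop := ∀ i, S (i + k) = S i + 1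

namespace IsSelfDual

variable {k : ℕ} {S : ℕ → ZMod 2}

lemma periodic (hS : IsSelfDual k S) (i : ℕ) : S (i + 2 * k) = S i := by
  rw [two_mul, ← add_assoc, hS, hS, CharTwo.add_cancel_right]

lemma blockDelta {n : ℕ} (hS : IsSelfDual (2 * n) S) : IsSelfDual n (blockDelta n S) := by
  intro i
  simp only [_root_.blockDelta, add_assoc, ← two_mul, hS i]
  ring

lemma of_lt (hk : 0 < k) (hper : ∀ i, S (i + 2 * k) = S i)
    (h : ∀ i < k, S (i + k) = S i + 1) : IsSelfDual k S := by
  intro i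
  induction i using Nat.strong_induction_on with
  | _ i ih =>
    rcases lt_or_ge i k with hi | hi
    · exact h i hi
    obtain ⟨j, rfl⟩ := Nat.exists_eq_add_of_le' hi
    rcases lt_or_ge j k with hj | hj
    · rw [add_assoc, ← two_mul, hper, h j hj, CharTwo.add_cancel_right]
    obtain ⟨l, rfl⟩ := Nat.exists_eq_add_of_le' hj
    have hl : l < l + k + k := by omega
    rw [add_assoc l k k, ← two_mul, hper, add_right_comm, hper, ih l hl]

end IsSelfDual

/-- (1) If `S = [X, Y, X̄, Ȳ]` is a binary self-dual sequence of length `4n`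
generated by `CCR_{2n}` (i.e. `4n`-periodic with `S (i + 2n) = S i + 1`), then
`Δ_n S = [X+Y, Y+X̄]` is a self-dual sequence of length `2n` generated by `CCR_n`
(`2n`-periodic with `(Δ_n S)(i + n) = (Δ_n S) i + 1`).
(2) Conversely, if `[X, X̄]` is a self-dual sequence of length `2n`, then for any
word `Y` of length `n` the member `T = [Y, X+Y, Ȳ, X+Ȳ]` of `Δ_n⁻¹ [X, X̄]` is a
self-dual sequence of length `4n` and `Δ_n T = [X, X̄]`. -/
theorem stmt10 (n : ℕ) (hn : 0 < n) :
    (∀ S : ℕ → ZMod 2, (∀ i, S (i + 4 * n) = S i) →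
      (∀ i, S (i + 2 * n) = S i + 1) →
      (∀ i, blockDelta n S (i + 2 * n) = blockDelta n S i) ∧
      (∀ i, blockDelta n S (i + n) = blockDelta n S i + 1)) ∧
    (∀ X Y T : ℕ → ZMod 2,
      (∀ i, T (i + 4 * n) = T i) →
      (∀ i < n, T i = Y i ∧ T (i + n) = X i + Y i ∧
        T (i + 2 * n) = Y i + 1 ∧ T (i + 3 * n) = X i + Y i + 1) →
      (∀ i, T (i + 2 * n) = T i + 1) ∧
      (∀ i < n, blockDelta n T i = X i ∧ blockDelta n T (i + n) = X i + 1)) := by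
  refine ⟨fun S _ hS => ?_, fun X Y T hper hT => ?_⟩
  · have hΔ : IsSelfDual n (blockDelta n S) := IsSelfDual.blockDelta hS
    exact ⟨hΔ.periodic, hΔ⟩
  have hself : IsSelfDual (2 * n) T := by
    refine .of_lt (by omega) (fun i => by rw [← mul_assoc]; exact hper i) fun i hi => ?_
    rcases lt_or_ge i n with hin | hin
    · rw [(hT i hin).2.2.1, (hT i hin).1]
    obtain ⟨j, rfl⟩ := Nat.exists_eq_add_of_le' hin
    have hj : j < n := by omega
    rw [show j + n + 2 * n = j + 3 * n by ring, (hT j hj).2.2.2, (hT j hj).2.1]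
  refine ⟨hself, fun i hi => ?_⟩
  obtain ⟨h0, h1, h2, -⟩ := hT i hi
  simp only [blockDelta, add_assoc, ← two_mul, h0, h1, h2]
  constructor <;> ring_nf <;> reduce_mod_char
end

section
/- Let S_0,...,S_{r-1} be self-dual sequences over Z_m of length mn, each of full order (least period mn), pairwise inequivalent under cyclic shift, such that S_i and S_{i+1} differ in exactly m coordinates for 0 <= i < r-1, and suppose there exists l with gcd(l, mn) = 1 such that S_{r-1} and E^l S_0 differ in exactly m coordinates. Then the mnr words F^{jl} S_i (0 <= j < mn, 0 <= i < r), where F^j S is the length-n window of S starting at position j (indices mod mn), form a single-track Gray code of length n and period mnr over Z_m. -/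
/-- The list of words of the non-binary self-dual construction of single-track
Gray codes: the word with index `k` is `F^{(k/r)·l} S_{k % r}`, where `F^j S` is
the window of length `n` of the cyclic sequence `S` (of length `mn` over `Z_m`)
starting at position `j`. -/
def grayWordNB (m n r l : ℕ) (S : ℕ → ZMod (m * n) → ZMod m) : ℕ → Fin n → ZMod m :=
  fun k x => S (k % r) (((k / r * l : ℕ) : ZMod (m * n)) + ((x : ℕ) : ZMod (m * n)))


section aux

variable {m n : ℕ}

lemma count_window (hm : 2 ≤ m) (hn : 0 < n)
    (D : ZMod (m * n) → Prop)
    (hinv : ∀ z, D (z + (n : ZMod (m * n))) ↔ D z)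
    (hcard : Nat.card {z : ZMod (m * n) // D z} = m)
    (a : ZMod (m * n)) :
    Nat.card {x : Fin n // D (a + ((x : ℕ) : ZMod (m * n)))} = 1 := by
  haveI : NeZero (m * n) := ⟨by positivity⟩
  have hiter : ∀ (q : ℕ) (z : ZMod (m * n)), D (z + (q : ZMod (m * n)) * n) ↔ D z := by
    intro q
    induction q with
    | zero => simp
    | succ q ih =>
      intro z
      have e : z + ((q + 1 : ℕ) : ZMod (m * n)) * n = (z + (q : ZMod (m*n)) * n) + n := by
        push_cast; ring
      rw [e, hinv, ih]
  have key : Nat.card ({x : Fin n // D (a + ((x : ℕ) : ZMod (m * n)))} × Fin m)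
      = Nat.card {z : ZMod (m * n) // D z} := by
    apply Nat.card_eq_of_bijective
      (f := fun p => ⟨a + ((p.1.1 : ℕ) : ZMod (m * n)) + ((p.2 : ℕ) : ZMod (m * n)) * n,
        (hiter p.2 _).mpr p.1.2⟩)
    constructor
    · rintro ⟨⟨x, hx⟩, q⟩ ⟨⟨x', hx'⟩, q'⟩ hpq
      simp only [Subtype.mk.injEq] at hpq
      have e2 : (((x : ℕ) + (q : ℕ) * n : ℕ) : ZMod (m * n))
          = (((x' : ℕ) + (q' : ℕ) * n : ℕ) : ZMod (m * n)) := by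
        push_cast
        linear_combination hpq
      have b1 : (x : ℕ) + (q : ℕ) * n < m * n := by
        calc (x : ℕ) + (q : ℕ) * n < n + (q : ℕ) * n := by omega
        _ = ((q : ℕ) + 1) * n := by ring
        _ ≤ m * n := Nat.mul_le_mul_right n q.2
      have b2 : (x' : ℕ) + (q' : ℕ) * n < m * n := by
        calc (x' : ℕ) + (q' : ℕ) * n < n + (q' : ℕ) * n := by omega
        _ = ((q' : ℕ) + 1) * n := by ring
        _ ≤ m * n := Nat.mul_le_mul_right n q'.2
      have e3 : (x : ℕ) + (q : ℕ) * n = (x' : ℕ) + (q' : ℕ) * n := by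
        have := congrArg ZMod.val e2
        rwa [ZMod.val_natCast_of_lt b1, ZMod.val_natCast_of_lt b2] at this
      have ex : (x : ℕ) = (x' : ℕ) := by
        have hx1 : ((x : ℕ) + (q : ℕ) * n) % n = (x : ℕ) := by
          rw [Nat.add_mul_mod_self_right, Nat.mod_eq_of_lt x.2]
        have hx2 : ((x' : ℕ) + (q' : ℕ) * n) % n = (x' : ℕ) := by
          rw [Nat.add_mul_mod_self_right, Nat.mod_eq_of_lt x'.2]
        rw [← hx1, ← hx2, e3]
      have eq' : (q : ℕ) = (q' : ℕ) := by
        have hq1 : ((x : ℕ) + (q : ℕ) * n) / n = (q : ℕ) := by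
          rw [Nat.add_mul_div_right _ _ hn, Nat.div_eq_of_lt x.2, Nat.zero_add]
        have hq2 : ((x' : ℕ) + (q' : ℕ) * n) / n = (q' : ℕ) := by
          rw [Nat.add_mul_div_right _ _ hn, Nat.div_eq_of_lt x'.2, Nat.zero_add]
        rw [← hq1, ← hq2, e3]
      ext
      · exact ex
      · exact eq'
    · rintro ⟨z, hz⟩
      set w := (z - a).val with hw
      have hwlt : w < m * n := ZMod.val_lt _
      have hxlt : w % n < n := Nat.mod_lt _ hn
      have hqlt : w / n < m := (Nat.div_lt_iff_lt_mul hn).mpr hwlt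
      have hzz : a + ((w % n : ℕ) : ZMod (m * n)) + ((w / n : ℕ) : ZMod (m * n)) * n = z := by
        have h1 : ((w % n + w / n * n : ℕ) : ZMod (m * n)) = z - a := by
          rw [Nat.mod_add_div']
          simp [hw, ZMod.natCast_val, ZMod.cast_id]
        push_cast at h1
        linear_combination h1
      have hD : D (a + ((w % n : ℕ) : ZMod (m * n))) := by
        have := (hiter (w / n) (a + ((w % n : ℕ) : ZMod (m * n)))).mp
        apply this
        rw [hzz]; exact hz
      exact ⟨⟨⟨⟨w % n, hxlt⟩, hD⟩, ⟨w / n, hqlt⟩⟩, Subtype.ext hzz⟩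
  have hfm : Nat.card (Fin m) = m := by simp
  rw [Nat.card_prod, hcard, hfm] at key
  have hm0 : 0 < m := by omega
  have : Nat.card {x : Fin n // D (a + ((x : ℕ) : ZMod (m * n)))} * m = 1 * m := by
    rw [key, one_mul]
  exact Nat.eq_of_mul_eq_mul_right hm0 this

lemma window_ext (hm : 2 ≤ m) (hn : 0 < n)
    (S T : ZMod (m * n) → ZMod m)
    (hS : ∀ x, S (x + (n : ZMod (m * n))) = S x + 1)
    (hT : ∀ x, T (x + (n : ZMod (m * n))) = T x + 1)
    (a b : ZMod (m * n))
    (h : ∀ x : ℕ, x < n → S (a + (x : ZMod (m * n))) = T (b + (x : ZMod (m * n)))) :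
    ∀ z : ZMod (m * n), S (a + z) = T (b + z) := by
  haveI : NeZero (m * n) := ⟨by positivity⟩
  have hiterS : ∀ (q : ℕ) (x : ZMod (m * n)), S (x + (q : ZMod (m * n)) * n) = S x + q := by
    intro q
    induction q with
    | zero => simp
    | succ q ih =>
      intro x
      have e : x + ((q + 1 : ℕ) : ZMod (m * n)) * n = (x + (q : ZMod (m*n)) * n) + n := by
        push_cast; ring
      rw [e, hS, ih]; push_cast; ring
  have hiterT : ∀ (q : ℕ) (x : ZMod (m * n)), T (x + (q : ZMod (m * n)) * n) = T x + q := by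
    intro q
    induction q with
    | zero => simp
    | succ q ih =>
      intro x
      have e : x + ((q + 1 : ℕ) : ZMod (m * n)) * n = (x + (q : ZMod (m*n)) * n) + n := by
        push_cast; ring
      rw [e, hT, ih]; push_cast; ring
  intro z
  have hz : ((z.val % n : ℕ) : ZMod (m * n)) + ((z.val / n : ℕ) : ZMod (m * n)) * n = z := by
    have h1 : ((z.val % n + z.val / n * n : ℕ) : ZMod (m * n)) = z := by
      rw [Nat.mod_add_div']
      simp [ZMod.natCast_val, ZMod.cast_id]
    push_cast at h1
    linear_combination h1
  have e1 : a + z = (a + ((z.val % n : ℕ) : ZMod (m * n))) + ((z.val / n : ℕ) : ZMod (m * n)) * n := by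
    linear_combination -hz
  have e2 : b + z = (b + ((z.val % n : ℕ) : ZMod (m * n))) + ((z.val / n : ℕ) : ZMod (m * n)) * n := by
    linear_combination -hz
  rw [e1, e2, hiterS, hiterT, h _ (Nat.mod_lt _ hn)]

end aux

/-- Construction of a non-binary single-track Gray code: if `S_0, …, S_{r-1}` are
self-dual sequences over `Z_m` of length `mn` (`S_i (x + n) = S_i x + 1`), each of
full order (least period `mn`), pairwise inequivalent under cyclic shift, such
that consecutive ones differ in exactly `m` coordinates, and `S_{r-1}` differs
from `E^l S_0` in exactly `m` coordinates with `gcd(l, mn) = 1`, then the `mnr`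
words `F^{jl} S_i` form a single-track Gray code of length `n` and period `mnr`
over `Z_m`. -/
theorem stmt19 (m n r l : ℕ) (hm : 2 ≤ m) (hn : 0 < n) (hr : 0 < r)
    (S : ℕ → ZMod (m * n) → ZMod m)
    (hsd : ∀ i, i < r → ∀ x : ZMod (m * n),
      S i (x + (n : ZMod (m * n))) = S i x + 1)
    (hfull : ∀ i, i < r → ∀ t : ZMod (m * n), (∀ x, S i (x + t) = S i x) → t = 0)
    (hineq : ∀ i j, i < r → j < r → i ≠ j →
      ∀ t : ZMod (m * n), (fun x => S i (x + t)) ≠ S j)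
    (hstep : ∀ i, i + 1 < r →
      Nat.card {x : ZMod (m * n) // S (i + 1) x ≠ S i x} = m)
    (hl : Nat.gcd l (m * n) = 1)
    (hlast : Nat.card {x : ZMod (m * n) //
      S 0 (x + (l : ZMod (m * n))) ≠ S (r - 1) x} = m) :
    (∀ k, grayWordNB m n r l S (k + m * n * r) = grayWordNB m n r l S k) ∧
    (∀ k k', k < m * n * r → k' < m * n * r →
      grayWordNB m n r l S k = grayWordNB m n r l S k' → k = k') ∧
    (∀ k, Nat.card {x : Fin n //
      grayWordNB m n r l S (k + 1) x ≠ grayWordNB m n r l S k x} = 1) ∧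
    (∃ t : ℕ → ZMod m, (∀ k, t (k + m * n * r) = t k) ∧
      ∃ off : Fin n → ℕ, ∀ k x, grayWordNB m n r l S k x = t (k + off x)) := by
  haveI : NeZero (m * n) := ⟨by positivity⟩
  -- Part 1: periodicity
  have hper : ∀ k, grayWordNB m n r l S (k + m * n * r) = grayWordNB m n r l S k := by
    intro k
    funext x
    simp only [grayWordNB, Nat.add_mul_mod_self_right, Nat.add_mul_div_right _ _ hr]
    congr 2
    have e : ((k / r + m * n) * l : ℕ) = k / r * l + (m * n) * l := by ring
    have e0 : ((m * n * l : ℕ) : ZMod (m * n)) = 0 := by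
      rw [Nat.cast_mul, ZMod.natCast_self, zero_mul]
    rw [e, Nat.cast_add, e0, add_zero]
  -- Part 2: injectivity
  have hinj : ∀ k k', k < m * n * r → k' < m * n * r →
      grayWordNB m n r l S k = grayWordNB m n r l S k' → k = k' := by
    intro k k' hk hk' h
    have hi : k % r < r := Nat.mod_lt _ hr
    have hi' : k' % r < r := Nat.mod_lt _ hr
    have hwin : ∀ x : ℕ, x < n →
        S (k % r) (((k / r * l : ℕ) : ZMod (m * n)) + (x : ZMod (m * n)))
        = S (k' % r) (((k' / r * l : ℕ) : ZMod (m * n)) + (x : ZMod (m * n))) := by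
      intro x hx
      have := congrFun h ⟨x, hx⟩
      simpa [grayWordNB] using this
    have hext := window_ext hm hn (S (k % r)) (S (k' % r)) (hsd _ hi) (hsd _ hi') _ _ hwin
    have hshift : ∀ w : ZMod (m * n),
        S (k % r) (w + (((k / r * l : ℕ) : ZMod (m * n)) - ((k' / r * l : ℕ) : ZMod (m * n))))
        = S (k' % r) w := by
      intro w
      have h1 := hext (w - ((k' / r * l : ℕ) : ZMod (m * n)))
      have e1 : ((k / r * l : ℕ) : ZMod (m * n)) + (w - ((k' / r * l : ℕ) : ZMod (m * n)))
          = w + (((k / r * l : ℕ) : ZMod (m * n)) - ((k' / r * l : ℕ) : ZMod (m * n))) := by ring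
      have e2 : ((k' / r * l : ℕ) : ZMod (m * n)) + (w - ((k' / r * l : ℕ) : ZMod (m * n))) = w := by
        ring
      rwa [e1, e2] at h1
    have hii : k % r = k' % r := by
      by_contra hne
      exact hineq _ _ hi hi' hne _ (funext hshift)
    have hjj : ((k / r * l : ℕ) : ZMod (m * n)) = ((k' / r * l : ℕ) : ZMod (m * n)) := by
      have h0 : (((k / r * l : ℕ) : ZMod (m * n)) - ((k' / r * l : ℕ) : ZMod (m * n))) = 0 := by
        apply hfull _ hi
        intro x
        rw [hshift x, hii]
      linear_combination h0
    have hmod : k / r * l ≡ k' / r * l [MOD m * n] := (ZMod.natCast_eq_natCast_iff _ _ _).mp hjj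
    have hdiv : k / r ≡ k' / r [MOD m * n] := Nat.ModEq.cancel_right_of_coprime (Nat.coprime_comm.mp hl) hmod
    have hj1 : k / r < m * n := (Nat.div_lt_iff_lt_mul hr).mpr hk
    have hj2 : k' / r < m * n := (Nat.div_lt_iff_lt_mul hr).mpr hk'
    have hjeq : k / r = k' / r := by
      have := hdiv
      unfold Nat.ModEq at this
      rwa [Nat.mod_eq_of_lt hj1, Nat.mod_eq_of_lt hj2] at this
    have d1 := Nat.div_add_mod k r
    have d2 := Nat.div_add_mod k' r
    rw [hjeq, hii] at d1
    omega
  -- Part 3: single change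
  have hsingle : ∀ k, Nat.card {x : Fin n //
      grayWordNB m n r l S (k + 1) x ≠ grayWordNB m n r l S k x} = 1 := by
    intro k
    have hi : k % r < r := Nat.mod_lt _ hr
    have hdm := Nat.div_add_mod k r
    rcases Nat.lt_or_ge (k % r + 1) r with hcase | hcase
    · -- same sequence, next shift index stays
      have e : k + 1 = r * (k / r) + (k % r + 1) := by omega
      have h1 : (k + 1) % r = k % r + 1 := by
        rw [e, Nat.mul_add_mod, Nat.mod_eq_of_lt hcase]
      have h2 : (k + 1) / r = k / r := by
        rw [e, Nat.mul_add_div hr, Nat.div_eq_of_lt hcase, add_zero]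
      simp only [grayWordNB, h1, h2]
      exact count_window hm hn (fun z => S (k % r + 1) z ≠ S (k % r) z)
        (by
          intro z
          beta_reduce
          rw [hsd _ hcase, hsd _ hi]
          simp)
        (hstep _ hcase) _
    · have hlastidx : k % r = r - 1 := by omega
      have e : k + 1 = r * (k / r + 1) := by rw [Nat.mul_add, Nat.mul_one]; omega
      have h1 : (k + 1) % r = 0 := by rw [e]; exact Nat.mul_mod_right r _
      have h2 : (k + 1) / r = k / r + 1 := by rw [e]; exact Nat.mul_div_cancel_left _ hr
      have e3 : ∀ x : Fin n, (((k / r + 1) * l : ℕ) : ZMod (m * n)) + ((x : ℕ) : ZMod (m * n))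
          = (((k / r * l : ℕ) : ZMod (m * n)) + ((x : ℕ) : ZMod (m * n))) + (l : ZMod (m * n)) := by
        intro x; push_cast; ring
      simp only [grayWordNB, h1, h2, e3, hlastidx]
      exact count_window hm hn (fun z => S 0 (z + (l : ZMod (m * n))) ≠ S (r - 1) z)
        (by
          intro z
          beta_reduce
          have e4 : (z + (n : ZMod (m * n))) + (l : ZMod (m * n))
              = (z + (l : ZMod (m * n))) + (n : ZMod (m * n)) := by ring
          rw [e4, hsd 0 (by omega), hsd (r - 1) (by omega)]
          simp)
        hlast _
  refine ⟨hper, hinj, hsingle, ?_⟩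
  -- Part 4: single track
  have hu : IsUnit (l : ZMod (m * n)) := by
    rw [ZMod.isUnit_iff_coprime]
    exact hl
  refine ⟨fun k => grayWordNB m n r l S k ⟨0, hn⟩, fun k => congrFun (hper k) _,
    fun x => r * (((l : ZMod (m * n))⁻¹ * ((x : ℕ) : ZMod (m * n))).val), ?_⟩
  intro k x
  simp only [grayWordNB, Nat.add_mul_mod_self_left, Nat.add_mul_div_left _ _ hr]
  congr 1
  have hcl : ((((l : ZMod (m * n))⁻¹ * ((x : ℕ) : ZMod (m * n))).val : ℕ) : ZMod (m * n))
      * (l : ZMod (m * n)) = ((x : ℕ) : ZMod (m * n)) := by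
    have hval : ((((l : ZMod (m * n))⁻¹ * ((x : ℕ) : ZMod (m * n))).val : ℕ) : ZMod (m * n))
        = (l : ZMod (m * n))⁻¹ * ((x : ℕ) : ZMod (m * n)) := by
      simp [ZMod.natCast_val, ZMod.cast_id]
    rw [hval, mul_comm ((l : ZMod (m * n))⁻¹) _, mul_assoc, ZMod.inv_mul_of_unit _ hu, mul_one]
  have e5 : (((k / r + ((l : ZMod (m * n))⁻¹ * ((x : ℕ) : ZMod (m * n))).val) * l : ℕ)
      : ZMod (m * n)) = ((k / r * l : ℕ) : ZMod (m * n))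
      + ((((l : ZMod (m * n))⁻¹ * ((x : ℕ) : ZMod (m * n))).val : ℕ) : ZMod (m * n))
      * (l : ZMod (m * n)) := by
    push_cast; ring
  rw [e5, hcl]
  simp
end
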